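/- arXiv:1809.09830 — 7 statements merged into one kernel-verified Lean document; each statement's English description precedes it below -/
import Mathlib

section
/- Every maximal nested set of a building set B on a finite set S has cardinality |S| − |B_max|. In particular, every maximal nested set of a connected building set on S has cardinality |S| − 1. -/
open Finset

variable {α : Type*} [DecidableEq α]

/-- A building set on a nonempty finite set `S`. -/
def IsBuildingSet (S : Finset α) (B : Finset (Finset α)) : Prop :=
  S.Nonempty ∧
  (∀ I ∈ B, I ⊆ S ∧ I.Nonempty) ∧
  (∀ I ∈ B, ∀ J ∈ B, (I ∩ J).Nonempty → I ∪ J ∈ B) ∧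
  (∀ i ∈ S, ({i} : Finset α) ∈ B)

/-- The set of maximal elements of `B` with respect to inclusion. -/
def bmax (B : Finset (Finset α)) : Finset (Finset α) :=
  B.filter fun I => ∀ J ∈ B, I ⊆ J → I = J

/-- The restriction `B|_C = {I ∈ B : I ⊆ C}`. -/
def restrict (B : Finset (Finset α)) (C : Finset α) : Finset (Finset α) :=
  B.filter fun I => I ⊆ C

/-- A nested set of a building set `B`. -/
def IsNestedSet (B N : Finset (Finset α)) : Prop :=
  N ⊆ B \ bmax B ∧
  (∀ I ∈ N, ∀ J ∈ N, I ⊆ J ∨ J ⊆ I ∨ I ∩ J = ∅) ∧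
  (∀ F ⊆ N, 2 ≤ F.card →
    (∀ I ∈ F, ∀ J ∈ F, I ≠ J → I ∩ J = ∅) → F.sup id ∉ B)

/-- A maximal nested set of `B`. -/
def IsMaxNestedSet (B N : Finset (Finset α)) : Prop :=
  IsNestedSet B N ∧ ∀ N', IsNestedSet B N' → N ⊆ N' → N = N'

/-- Auxiliary: sup of a family of subsets of `T` is a subset of `T`. -/
lemma bs_sup_subset {F : Finset (Finset α)} {T : Finset α} (h : ∀ K ∈ F, K ⊆ T) :
    F.sup id ⊆ T := fun a ha => by
  obtain ⟨K, hK, haK⟩ := Finset.mem_sup.mp ha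
  exact h K hK haK

/-- Auxiliary: membership gives inclusion in the sup. -/
lemma bs_subset_sup (F : Finset (Finset α)) {K : Finset α} (hK : K ∈ F) : K ⊆ F.sup id :=
  fun a ha => Finset.mem_sup.mpr ⟨K, hK, ha⟩

/-- Auxiliary: in any finset family, every member is contained in a maximal member. -/
lemma bs_exists_maximal_superset (G : Finset (Finset α)) {L : Finset α} (hL : L ∈ G) :
    ∃ C ∈ G, L ⊆ C ∧ ∀ K ∈ G, C ⊆ K → C = K := by
  obtain ⟨C, hC, hmax⟩ := (G.filter fun K => L ⊆ K).exists_maximal ⟨L, by simp [hL]⟩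
  rw [mem_filter] at hC
  refine ⟨C, hC.1, hC.2, fun K hK hCK => ?_⟩
  have := hmax (mem_filter.mpr ⟨hK, hC.2.trans hCK⟩) hCK
  exact le_antisymm hCK this

/-- Auxiliary: the sup of a nonempty family of building-set members all containing `x`
is again a member of the building set (and contains `x`). -/
lemma bs_sup_mem {S : Finset α} {B : Finset (Finset α)} (hB : IsBuildingSet S B) (x : α) :
    ∀ (F : Finset (Finset α)), F.Nonempty → (∀ L ∈ F, L ∈ B ∧ x ∈ L) →
      F.sup id ∈ B ∧ x ∈ F.sup id := by
  intro F hne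
  induction hne using Finset.Nonempty.cons_induction with
  | singleton a => intro h; simpa using h a (by simp)
  | cons a s ha hs ih =>
    intro h
    have h1 := h a (by simp)
    have h2 := ih fun L hL => h L (by simp [hL])
    have hx : (a ∩ s.sup id).Nonempty := ⟨x, mem_inter.mpr ⟨h1.2, h2.2⟩⟩
    have := hB.2.2.1 a h1.1 (s.sup id) h2.1 hx
    constructor
    · simpa [Finset.sup_cons, Finset.sup_eq_union] using this
    · simp only [Finset.sup_cons, id, Finset.sup_eq_union] at *
      exact mem_union.mpr (Or.inl h1.2)

/-- Auxiliary: connected component of `x` inside `T`, within a building set. -/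
lemma bs_component {S : Finset α} {B : Finset (Finset α)} (hB : IsBuildingSet S B)
    {T : Finset α} {x : α} (hxT : x ∈ T) (hTS : T ⊆ S) :
    ∃ J ∈ B, x ∈ J ∧ J ⊆ T ∧ ∀ L ∈ B, L ⊆ T → (L ∩ J).Nonempty → L ⊆ J := by
  set F := B.filter (fun L => L ⊆ T ∧ x ∈ L) with hF
  have hxF : ({x} : Finset α) ∈ F := by
    rw [hF, mem_filter]
    exact ⟨hB.2.2.2 x (hTS hxT), by simpa using hxT, by simp⟩
  have hsup := bs_sup_mem hB x F ⟨_, hxF⟩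
    (fun L hL => by rw [hF, mem_filter] at hL; exact ⟨hL.1, hL.2.2⟩)
  set J := F.sup id with hJ
  have hJT : J ⊆ T := by
    rw [hJ]
    refine bs_sup_subset fun L hL => ?_
    rw [hF, mem_filter] at hL; exact hL.2.1
  refine ⟨J, hsup.1, hsup.2, hJT, fun L hLB hLT hLJ => ?_⟩
  have hUB : L ∪ J ∈ B := hB.2.2.1 L hLB J hsup.1 hLJ
  have hUF : L ∪ J ∈ F := by
    rw [hF, mem_filter]
    exact ⟨hUB, union_subset hLT hJT, mem_union.mpr (Or.inr hsup.2)⟩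
  have : L ∪ J ⊆ J := by rw [hJ]; exact bs_subset_sup _ hUF
  exact (union_subset_iff.mp this).1

set_option maxHeartbeats 1600000 in
/-- Every maximal nested set of a building set `B` on `S` has cardinality
`|S| - |B_max|`; in particular `|S| - 1` if `B` is connected. -/
theorem card_maxNestedSet
    (S : Finset α) (B : Finset (Finset α)) (hB : IsBuildingSet S B)
    (N : Finset (Finset α)) (hN : IsMaxNestedSet B N) :
    N.card = S.card - (bmax B).card ∧
      (bmax B = {S} → N.card = S.card - 1) := by
  obtain ⟨⟨hNB, hcomp, hdisj⟩, hmaxN⟩ := hN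
  obtain ⟨hSne, hsub, hU, hsing⟩ := hB
  have hB' : IsBuildingSet S B := ⟨hSne, hsub, hU, hsing⟩
  -- basic facts
  have hbmaxB : bmax B ⊆ B := filter_subset _ _
  have hbmax_spec : ∀ I ∈ bmax B, ∀ K ∈ B, I ⊆ K → I = K := by
    intro I hI; exact (mem_filter.mp hI).2
  have hNmem : ∀ K ∈ N, K ∈ B ∧ K ∉ bmax B := by
    intro K hK; exact mem_sdiff.mp (hNB hK)
  have hbmax_disj : ∀ I ∈ bmax B, ∀ J ∈ bmax B, (I ∩ J).Nonempty → I = J := by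
    intro I hI J hJ hIJ
    have h1 : I ∪ J ∈ B := hU I (hbmaxB hI) J (hbmaxB hJ) hIJ
    have h2 : I = I ∪ J := hbmax_spec I hI _ h1 subset_union_left
    have h3 : J = I ∪ J := hbmax_spec J hJ _ h1 subset_union_right
    exact h2.trans h3.symm
  set L : Finset (Finset α) := N ∪ bmax B with hLdef
  have hLB : L ⊆ B := by
    intro I hI
    rcases mem_union.mp hI with h | h
    · exact (hNmem I h).1
    · exact hbmaxB h
  -- comparability of elements of N with elements of L
  have hcompL : ∀ I ∈ L, ∀ K ∈ N, K ⊆ I ∨ I ⊆ K ∨ K ∩ I = ∅ := by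
    intro I hI K hK
    rcases mem_union.mp hI with hIN | hIbm
    · rcases hcomp K hK I hIN with h | h | h
      · exact Or.inl h
      · exact Or.inr (Or.inl h)
      · exact Or.inr (Or.inr h)
    · by_cases hKI : K ∩ I = ∅
      · exact Or.inr (Or.inr hKI)
      · left
        obtain ⟨M, hM, hKM, hMmax⟩ := bs_exists_maximal_superset B (hNmem K hK).1
        have hMbm : M ∈ bmax B := mem_filter.mpr ⟨hM, hMmax⟩
        have : M = I := by
          apply hbmax_disj M hMbm I hIbm
          obtain ⟨a, ha⟩ := nonempty_iff_ne_empty.mpr hKI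
          exact ⟨a, mem_inter.mpr ⟨hKM (mem_inter.mp ha).1, (mem_inter.mp ha).2⟩⟩
        rw [← this]; exact hKM
  -- comparability within L
  have hLL : ∀ I ∈ L, ∀ I' ∈ L, I ⊆ I' ∨ I' ⊆ I ∨ I ∩ I' = ∅ := by
    intro I hI I' hI'
    rcases mem_union.mp hI with hIN | hIbm
    · rcases hcompL I' hI' I hIN with h | h | h
      · exact Or.inl h
      · exact Or.inr (Or.inl h)
      · exact Or.inr (Or.inr h)
    · rcases mem_union.mp hI' with hI'N | hI'bm
      · rcases hcompL I hI I' hI'N with h | h | h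
        · exact Or.inr (Or.inl h)
        · exact Or.inl h
        · exact Or.inr (Or.inr (by rw [inter_comm]; exact h))
      · by_cases h : I ∩ I' = ∅
        · exact Or.inr (Or.inr h)
        · exact Or.inl (le_of_eq (hbmax_disj I hIbm I' hI'bm (nonempty_iff_ne_empty.mpr h)))
  -- the "leftover" of I : points of I not covered by elements of N strictly below I
  set lx : Finset α → Finset α := fun I => I \ ((N.filter (fun K => K ⊂ I)).sup id) with hlx
  have hmem_lx : ∀ I s, s ∈ lx I ↔ s ∈ I ∧ ∀ K ∈ N, K ⊂ I → s ∉ K := by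
    intro I s
    rw [hlx]; simp only [mem_sdiff, Finset.mem_sup, mem_filter, id]
    constructor
    · rintro ⟨h1, h2⟩
      exact ⟨h1, fun K hK hKI hs => h2 ⟨K, ⟨hK, hKI⟩, hs⟩⟩
    · rintro ⟨h1, h2⟩
      exact ⟨h1, fun ⟨K, ⟨hK, hKI⟩, hs⟩ => h2 K hK hKI hs⟩
  -- leftover is nonempty
  have hlx_ne : ∀ I ∈ L, (lx I).Nonempty := by
    intro I hI
    rw [nonempty_iff_ne_empty]
    intro hempty
    set D := N.filter (fun K => K ⊂ I) with hD
    have hIsub : I ⊆ D.sup id := by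
      intro s hs
      by_contra h
      have : s ∈ lx I := mem_sdiff.mpr ⟨hs, h⟩
      rw [hempty] at this; exact absurd this (notMem_empty s)
    have hsubI : D.sup id ⊆ I := bs_sup_subset fun K hK => (mem_filter.mp hK).2.1
    have hsupD : D.sup id = I := le_antisymm hsubI hIsub
    -- pass to maximal elements
    set Ch := D.filter (fun C => ∀ K ∈ D, C ⊆ K → C = K) with hCh
    have hChD : Ch ⊆ D := filter_subset _ _
    have hsupCh : Ch.sup id = I := by
      refine Finset.Subset.antisymm ((Finset.sup_mono hChD).trans hsupD.le) ?_
      rw [← hsupD]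
      refine bs_sup_subset fun K hK => ?_
      obtain ⟨C, hC, hKC, hCmax⟩ := bs_exists_maximal_superset D hK
      exact hKC.trans (bs_subset_sup _ (mem_filter.mpr ⟨hC, hCmax⟩))
    have hChN : Ch ⊆ N := hChD.trans (filter_subset _ _)
    have hChdisj : ∀ C ∈ Ch, ∀ C' ∈ Ch, C ≠ C' → C ∩ C' = ∅ := by
      intro C hC C' hC' hne
      rcases hcomp C (hChN hC) C' (hChN hC') with h | h | h
      · exact absurd ((mem_filter.mp hC).2 C' (hChD hC') h) hne
      · exact absurd ((mem_filter.mp hC').2 C (hChD hC) h).symm hne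
      · exact h
    have hChne : Ch.Nonempty := by
      rw [nonempty_iff_ne_empty]
      intro h
      obtain ⟨a, ha⟩ := (hsub I (hLB hI)).2
      rw [h] at hsupCh; simp at hsupCh
      rw [← hsupCh] at ha; exact absurd ha (notMem_empty a)
    have hcard2 : 2 ≤ Ch.card := by
      rcases Nat.lt_or_ge Ch.card 2 with h | h
      · interval_cases hc : Ch.card
        · exact absurd (card_eq_zero.mp hc) (nonempty_iff_ne_empty.mp hChne)
        · obtain ⟨C, hC⟩ := card_eq_one.mp hc
          rw [hC] at hsupCh; simp at hsupCh
          have : C ∈ Ch := by rw [hC]; simp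
          have hCD := hChD this
          rw [hD, mem_filter] at hCD
          exact absurd hsupCh (ne_of_lt hCD.2).elim
      · exact h
    exact hdisj Ch hChN hcard2 hChdisj (hsupCh ▸ hLB hI)
  -- leftover is a subsingleton (uses maximality of N)
  have hlx_sub : ∀ I ∈ L, ∀ x ∈ lx I, ∀ y ∈ lx I, x = y := by
    intro I hI x hx y hy
    by_contra hxy
    have hIS := (hsub I (hLB hI)).1
    have hxI := ((hmem_lx I x).mp hx).1
    have hyI := ((hmem_lx I y).mp hy).1
    have hxlx := ((hmem_lx I x).mp hx).2
    have hylx := ((hmem_lx I y).mp hy).2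
    have hxT : x ∈ I \ {y} := mem_sdiff.mpr ⟨hxI, by simpa using hxy⟩
    obtain ⟨J, hJB, hxJ, hJT, hJmax⟩ :=
      bs_component hB' hxT ((sdiff_subset).trans hIS)
    have hJI : J ⊂ I := by
      refine Finset.ssubset_iff_subset_ne.mpr ⟨hJT.trans sdiff_subset, ?_⟩
      intro h
      have : y ∈ J := h ▸ hyI
      have := hJT this
      simp at this
    have hJnbm : J ∉ bmax B := by
      intro h
      exact hJI.ne (hbmax_spec J h I (hLB hI) hJI.subset)
    have hJnN : J ∉ N := fun h => hxlx J h hJI hxJ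
    have hkey : ∀ K ∈ N, K ⊂ I → K ∩ J = ∅ ∨ K ⊆ J := by
      intro K hK hKI
      by_cases h : K ∩ J = ∅
      · exact Or.inl h
      · right
        have hKT : K ⊆ I \ {y} := by
          intro s hs
          refine mem_sdiff.mpr ⟨hKI.subset hs, ?_⟩
          simp only [mem_singleton]
          intro h'; exact hylx K hK hKI (h' ▸ hs)
        exact hJmax K (hNmem K hK).1 hKT (nonempty_iff_ne_empty.mpr h)
    -- J together with N is nested
    have hnested : IsNestedSet B (insert J N) := by
      refine ⟨?_, ?_, ?_⟩
      · intro K hK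
        rcases mem_insert.mp hK with h | h
        · subst h; exact mem_sdiff.mpr ⟨hJB, hJnbm⟩
        · exact hNB h
      · intro K₁ hK₁ K₂ hK₂
        have key : ∀ K ∈ N, J ⊆ K ∨ K ⊆ J ∨ J ∩ K = ∅ := by
          intro K hK
          by_cases hJK : J ∩ K = ∅
          · exact Or.inr (Or.inr hJK)
          · rcases hcompL I hI K hK with h | h | h
            · rcases eq_or_ne K I with heq | hne'
              · exact Or.inl (heq ▸ hJI.subset)
              · rcases hkey K hK (Finset.ssubset_iff_subset_ne.mpr ⟨h, hne'⟩) with h'' | h''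
                · exact absurd (by rw [inter_comm]; exact h'') hJK
                · exact Or.inr (Or.inl h'')
            · exact Or.inl (hJI.subset.trans h)
            · exfalso
              apply hJK
              rw [← subset_empty, ← h]
              intro s hs
              rw [mem_inter] at hs ⊢
              exact ⟨hs.2, (mem_sdiff.mp (hJT hs.1)).1⟩
        rcases mem_insert.mp hK₁ with h₁ | h₁ <;> rcases mem_insert.mp hK₂ with h₂ | h₂
        · subst h₁; subst h₂; exact Or.inl subset_rfl
        · subst h₁; exact key K₂ h₂
        · subst h₂
          rcases key K₁ h₁ with h | h | h
          · exact Or.inr (Or.inl h)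
          · exact Or.inl h
          · exact Or.inr (Or.inr (by rw [inter_comm]; exact h))
        · exact hcomp K₁ h₁ K₂ h₂
      · intro F hF hcard hpair hsupB
        by_cases hJF : J ∈ F
        · -- F contains J
          set F' := F.erase J with hF'
          have hF'N : F' ⊆ N := by
            intro K hK
            rcases mem_insert.mp (hF (mem_of_mem_erase hK)) with h | h
            · rw [h] at hK; exact absurd hK (notMem_erase J F)
            · exact h
          have hF'ne : F'.Nonempty := by
            rw [← card_pos, card_erase_of_mem hJF]; omega
          have hdisjJ : ∀ K ∈ F', K ∩ J = ∅ := by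
            intro K hK
            exact hpair K (mem_of_mem_erase hK) J hJF (fun h => hJnN (h ▸ hF'N hK))
          have hJU : J ⊆ F.sup id := bs_subset_sup _ hJF
          have hxU : x ∈ F.sup id := hJU hxJ
          have hKI2 : ∀ K ∈ F', K ⊆ I ∨ K ∩ I = ∅ := by
            intro K hK
            rcases hcompL I hI K (hF'N hK) with h | h | h
            · exact Or.inl h
            · exfalso
              have : x ∈ K ∩ J := mem_inter.mpr ⟨h (hJI.subset hxJ), hxJ⟩
              rw [hdisjJ K hK] at this; exact absurd this (notMem_empty x)
            · exact Or.inr h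
          by_cases hUI : F.sup id ⊆ I
          · by_cases hyU : y ∈ F.sup id
            · obtain ⟨K, hKF, hyK⟩ := Finset.mem_sup.mp hyU
              have hKF' : K ∈ F' := by
                refine mem_erase.mpr ⟨?_, hKF⟩
                intro h
                have := hJT (h ▸ hyK)
                simp at this
              have hKI3 : K ⊆ I := by
                rcases hKI2 K hKF' with h | h
                · exact h
                · exfalso
                  have : y ∈ K ∩ I := mem_inter.mpr ⟨hyK, hyI⟩
                  rw [h] at this; exact absurd this (notMem_empty y)
              have hKssI : K ⊂ I := by
                rcases eq_or_ne K I with h | h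
                · exfalso
                  have : x ∈ K ∩ J := mem_inter.mpr ⟨h ▸ hJI.subset hxJ, hxJ⟩
                  rw [hdisjJ K hKF'] at this; exact absurd this (notMem_empty x)
                · exact Finset.ssubset_iff_subset_ne.mpr ⟨hKI3, h⟩
              exact hylx K (hF'N hKF') hKssI hyK
            · -- y ∉ U, so U ⊆ J, contradiction with disjointness
              have hUT : F.sup id ⊆ I \ {y} := by
                intro s hs
                exact mem_sdiff.mpr ⟨hUI hs, by simp; intro h; exact hyU (h ▸ hs)⟩
              have hUJ : F.sup id ⊆ J :=
                hJmax _ hsupB hUT ⟨x, mem_inter.mpr ⟨hxU, hxJ⟩⟩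
              obtain ⟨K, hK⟩ := hF'ne
              obtain ⟨a, ha⟩ := (hsub K ((hNmem K (hF'N hK)).1)).2
              have : a ∈ K ∩ J :=
                mem_inter.mpr ⟨ha, hUJ (bs_subset_sup _ (mem_of_mem_erase hK) ha)⟩
              rw [hdisjJ K hK] at this; exact absurd this (notMem_empty a)
          · -- U ⊄ I
            have hUIB : F.sup id ∪ I ∈ B :=
              hU _ hsupB I (hLB hI) ⟨x, mem_inter.mpr ⟨hxU, hxI⟩⟩
            rcases mem_union.mp hI with hIN | hIbm
            · set A := F'.filter (fun K => K ∩ I = ∅) with hA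
              have hAne : A.Nonempty := by
                rw [nonempty_iff_ne_empty]
                intro hAe
                apply hUI
                intro s hs
                obtain ⟨K, hKF, hsK⟩ := Finset.mem_sup.mp hs
                by_cases h : K = J
                · exact (mem_sdiff.mp (hJT (h ▸ hsK))).1
                · have hKF' : K ∈ F' := mem_erase.mpr ⟨h, hKF⟩
                  rcases hKI2 K hKF' with h' | h'
                  · exact h' hsK
                  · have hKA : K ∈ A := mem_filter.mpr ⟨hKF', h'⟩
                    rw [hAe] at hKA; exact absurd hKA (notMem_empty K)
              set G := insert I A with hG
              have hInA : I ∉ A := by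
                intro h
                obtain ⟨a, ha⟩ := (hsub I (hLB hI)).2
                have := (mem_filter.mp h).2
                have : a ∈ I ∩ I := mem_inter.mpr ⟨ha, ha⟩
                rw [(mem_filter.mp h).2] at this; exact absurd this (notMem_empty a)
              have hGN : G ⊆ N := by
                intro K hK
                rcases mem_insert.mp hK with h | h
                · exact h ▸ hIN
                · exact hF'N ((filter_subset _ _) h)
              have hGcard : 2 ≤ G.card := by
                rw [hG, card_insert_of_notMem hInA]
                have := card_pos.mpr hAne; omega
              have hGpair : ∀ K₁ ∈ G, ∀ K₂ ∈ G, K₁ ≠ K₂ → K₁ ∩ K₂ = ∅ := by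
                intro K₁ hK₁ K₂ hK₂ hne
                rcases mem_insert.mp hK₁ with h₁ | h₁ <;> rcases mem_insert.mp hK₂ with h₂ | h₂
                · exact absurd (h₁.trans h₂.symm) hne
                · subst h₁; rw [inter_comm]; exact (mem_filter.mp h₂).2
                · subst h₂; exact (mem_filter.mp h₁).2
                · exact hpair K₁ (mem_of_mem_erase ((filter_subset _ _) h₁)) K₂
                    (mem_of_mem_erase ((filter_subset _ _) h₂)) hne
              have hsupG : G.sup id = F.sup id ∪ I := by
                apply Finset.Subset.antisymm
                · refine bs_sup_subset fun K hK => ?_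
                  rcases mem_insert.mp hK with h | h
                  · exact h ▸ subset_union_right
                  · exact (bs_subset_sup _
                      (mem_of_mem_erase ((filter_subset _ _) h))).trans subset_union_left
                · intro s hs
                  rcases mem_union.mp hs with hs | hs
                  · obtain ⟨K, hKF, hsK⟩ := Finset.mem_sup.mp hs
                    by_cases h : K = J
                    · exact bs_subset_sup _ (mem_insert_self I A)
                        ((mem_sdiff.mp (hJT (h ▸ hsK))).1)
                    · have hKF' : K ∈ F' := mem_erase.mpr ⟨h, hKF⟩
                      by_cases h' : K ∩ I = ∅
                      · have hKA : K ∈ A := mem_filter.mpr ⟨hKF', h'⟩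
                        exact bs_subset_sup _ (mem_insert.mpr (Or.inr hKA)) hsK
                      · rcases hKI2 K hKF' with h'' | h''
                        · exact bs_subset_sup _ (mem_insert_self I A) (h'' hsK)
                        · exact absurd h'' h'
                  · exact bs_subset_sup _ (mem_insert_self I A) hs
              exact hdisj G hGN hGcard hGpair (hsupG ▸ hUIB)
            · -- I maximal : contradiction
              apply hUI
              have := hbmax_spec I hIbm _ hUIB subset_union_right
              intro s hs
              rw [this]
              exact mem_union.mpr (Or.inl hs)
        · exact hdisj F (fun K hK => by
            rcases mem_insert.mp (hF hK) with h | h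
            · exact absurd (h ▸ hK) hJF
            · exact h) hcard hpair hsupB
    have := hmaxN (insert J N) hnested (subset_insert J N)
    exact hJnN (this ▸ mem_insert_self J N)
  -- each leftover has exactly one element
  have hlx_card : ∀ I ∈ L, (lx I).card = 1 := by
    intro I hI
    obtain ⟨a, ha⟩ := hlx_ne I hI
    refine card_eq_one.mpr ⟨a, ?_⟩
    apply Finset.Subset.antisymm
    · intro s hs; simpa using hlx_sub I hI s hs a ha
    · simpa using ha
  -- leftovers are pairwise disjoint
  have haux : ∀ I ∈ L, ∀ I' ∈ L, I ⊂ I' → ∀ s ∈ lx I, s ∉ lx I' := by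
    intro I hI I' hI' hII' s hs hs'
    have hIN : I ∈ N := by
      rcases mem_union.mp hI with h | h
      · exact h
      · exact absurd (hbmax_spec I h I' (hLB hI') hII'.subset) hII'.ne
    exact ((hmem_lx I' s).mp hs').2 I hIN hII' ((hmem_lx I s).mp hs).1
  have hlx_disj : ∀ I ∈ L, ∀ I' ∈ L, I ≠ I' → Disjoint (lx I) (lx I') := by
    intro I hI I' hI' hne
    rw [Finset.disjoint_left]
    intro s hs hs'
    have hsI : s ∈ I := ((hmem_lx I s).mp hs).1
    have hsI' : s ∈ I' := ((hmem_lx I' s).mp hs').1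
    rcases hLL I hI I' hI' with h | h | h
    · exact haux I hI I' hI' (Finset.ssubset_iff_subset_ne.mpr ⟨h, hne⟩) s hs hs'
    · exact haux I' hI' I hI (Finset.ssubset_iff_subset_ne.mpr ⟨h, hne.symm⟩) s hs' hs
    · have : s ∈ I ∩ I' := mem_inter.mpr ⟨hsI, hsI'⟩
      rw [h] at this; exact absurd this (notMem_empty s)
  -- leftovers cover S
  have hcover : L.biUnion lx = S := by
    apply Finset.Subset.antisymm
    · intro s hs
      obtain ⟨I, hI, hsI⟩ := Finset.mem_biUnion.mp hs
      exact (hsub I (hLB hI)).1 ((hmem_lx I s).mp hsI).1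
    · intro s hs
      set G := L.filter (fun I => s ∈ I) with hG
      have hGne : G.Nonempty := by
        obtain ⟨M, hM, hsM, hMmax⟩ := bs_exists_maximal_superset B (hsing s hs)
        refine ⟨M, mem_filter.mpr ⟨?_, by simpa using hsM⟩⟩
        exact mem_union.mpr (Or.inr (mem_filter.mpr ⟨hM, hMmax⟩))
      obtain ⟨I, hIG, hImin⟩ := G.exists_minimal hGne
      rw [hG, mem_filter] at hIG
      refine Finset.mem_biUnion.mpr ⟨I, hIG.1, (hmem_lx I s).mpr ⟨hIG.2, ?_⟩⟩
      intro K hK hKI hsK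
      exact absurd (hImin (mem_filter.mpr ⟨mem_union.mpr (Or.inl hK), hsK⟩) hKI.subset) (not_subset_of_ssubset hKI)
  -- count
  have hcardS : S.card = L.card := by
    rw [← hcover, Finset.card_biUnion hlx_disj]
    rw [Finset.sum_congr rfl hlx_card]
    simp
  have hNdisj : Disjoint N (bmax B) := by
    rw [Finset.disjoint_left]
    intro K hK
    exact (hNmem K hK).2
  have hcardL : L.card = N.card + (bmax B).card := card_union_of_disjoint hNdisj
  constructor
  · omega
  · intro h
    have h1 : (bmax B).card = 1 := by rw [h]; exact card_singleton S
    omega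
end

section
/- Let B be a building set on S, let I_1, I_2 ∈ B be distinct, and let N be a nested set such that both N ∪ {I_1} and N ∪ {I_2} are maximal nested sets of B. Then I_1 ⊄ I_2 and I_2 ⊄ I_1. -/
open Finset

variable {α : Type*} [DecidableEq α]

lemma aux_not_subset
    (S : Finset α) (B : Finset (Finset α)) (hB : IsBuildingSet S B)
    (I₁ I₂ : Finset α) (hI₁ : I₁ ∈ B) (hne : I₁ ≠ I₂)
    (N : Finset (Finset α)) (hN : IsNestedSet B N)
    (hI₁N : I₁ ∉ N)
    (h₁ : IsMaxNestedSet B (insert I₁ N)) (h₂ : IsMaxNestedSet B (insert I₂ N))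
    (hsub : I₁ ⊆ I₂) : False := by
  obtain ⟨⟨h1a, h1b, h1c⟩, _⟩ := h₁
  obtain ⟨⟨h2a, h2b, h2c⟩, h2max⟩ := h₂
  set N' : Finset (Finset α) := insert I₁ (insert I₂ N) with hN'
  have hnested : IsNestedSet B N' := by
    refine ⟨?_, ?_, ?_⟩
    · intro J hJ
      rcases mem_insert.mp hJ with rfl | hJ
      · exact h1a (mem_insert_self _ _)
      · exact h2a hJ
    · intro I hI J hJ
      rcases mem_insert.mp hI with hIe | hI'
      · rcases mem_insert.mp hJ with hJe | hJ'
        · rw [hIe, hJe]; exact Or.inl (subset_refl _)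
        · rw [hIe]
          rcases mem_insert.mp hJ' with hJe | hJn
          · rw [hJe]; exact Or.inl hsub
          · exact h1b _ (mem_insert_self _ _) _ (mem_insert_of_mem hJn)
      · rcases mem_insert.mp hJ with hJe | hJ'
        · rw [hJe]
          rcases mem_insert.mp hI' with hIe | hIn
          · rw [hIe]; exact Or.inr (Or.inl hsub)
          · exact h1b _ (mem_insert_of_mem hIn) _ (mem_insert_self _ _)
        · exact h2b _ hI' _ hJ'
    · intro F hF hcard hdisj
      by_cases hF1 : I₁ ∈ F
      · by_cases hF2 : I₂ ∈ F
        · have hd := hdisj _ hF1 _ hF2 hne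
          have : I₁ ∩ I₂ = I₁ := inter_eq_left.mpr hsub
          have hne1 : I₁.Nonempty := (hB.2.1 I₁ hI₁).2
          rw [this] at hd
          exact absurd hd (Finset.nonempty_iff_ne_empty.mp hne1)
        · have hF' : F ⊆ insert I₁ N := by
            intro X hX
            rcases mem_insert.mp (hF hX) with rfl | hX'
            · exact mem_insert_self _ _
            · rcases mem_insert.mp hX' with rfl | hX''
              · exact absurd hX hF2
              · exact mem_insert_of_mem hX''
          exact fun hc => h1c F hF' hcard hdisj hc
      · have hF' : F ⊆ insert I₂ N := by
          intro X hX
          rcases mem_insert.mp (hF hX) with rfl | hX'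
          · exact absurd hX hF1
          · exact hX'
        exact fun hc => h2c F hF' hcard hdisj hc
  have heq := h2max N' hnested (by
    intro X hX
    exact mem_insert_of_mem hX)
  have hI₁mem : I₁ ∈ insert I₂ N := by rw [heq]; exact mem_insert_self _ _
  rcases mem_insert.mp hI₁mem with h | h
  · exact hne h
  · exact hI₁N h

/-- Proposition 4.5 (1) of Zelevinsky: if `N ∪ {I₁}` and `N ∪ {I₂}` are maximal
nested sets, then `I₁` and `I₂` are incomparable. -/
theorem maxNested_pair_not_subset
    (S : Finset α) (B : Finset (Finset α)) (hB : IsBuildingSet S B)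
    (I₁ I₂ : Finset α) (hI₁ : I₁ ∈ B) (hI₂ : I₂ ∈ B) (hne : I₁ ≠ I₂)
    (N : Finset (Finset α)) (hN : IsNestedSet B N)
    (hI₁N : I₁ ∉ N) (hI₂N : I₂ ∉ N)
    (h₁ : IsMaxNestedSet B (insert I₁ N)) (h₂ : IsMaxNestedSet B (insert I₂ N)) :
    ¬I₁ ⊆ I₂ ∧ ¬I₂ ⊆ I₁ := by
  constructor
  · intro h
    exact aux_not_subset S B hB I₁ I₂ hI₁ hne N hN hI₁N h₁ h₂ h
  · intro h
    exact aux_not_subset S B hB I₂ I₁ hI₂ hne.symm N hN hI₂N h₂ h₁ h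
end

section
/- Let B be a building set on S, let I_1, I_2 ∈ B be distinct with I_1 ∩ I_2 ≠ ∅, and let N be a nested set such that both N ∪ {I_1} and N ∪ {I_2} are maximal nested sets of B. Then every maximal element of the restriction B|_{I_1 ∩ I_2} belongs to N. -/
open Finset

variable {α : Type*} [DecidableEq α]

private lemma mem_bmax_restrict {B : Finset (Finset α)} {C J : Finset α}
    (h : J ∈ bmax (_root_.restrict B C)) :
    J ∈ B ∧ J ⊆ C ∧ ∀ K ∈ B, K ⊆ C → J ⊆ K → J = K := by
  have h1 : J ∈ _root_.restrict B C ∧ ∀ K ∈ _root_.restrict B C, J ⊆ K → J = K :=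
    mem_filter.mp h
  have h2 : J ∈ B ∧ J ⊆ C := mem_filter.mp h1.1
  refine ⟨h2.1, h2.2, fun K hK hKC hJK => h1.2 K ?_ hJK⟩
  exact mem_filter.mpr ⟨hK, hKC⟩

private lemma nested_aux {S : Finset α} {B : Finset (Finset α)} (hB : IsBuildingSet S B)
    {I₁ I₂ : Finset α} (hI₁ : I₁ ∈ B) (hI₂ : I₂ ∈ B)
    {N : Finset (Finset α)} (hN : IsNestedSet B N)
    (h₁ : IsMaxNestedSet B (insert I₁ N)) (h₂ : IsNestedSet B (insert I₂ N))
    {J : Finset α} (hJ : J ∈ bmax (_root_.restrict B (I₁ ∩ I₂))) (hJI : J ≠ I₁) :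
    J ∈ N := by
  obtain ⟨hSne, hsub, hclose, hsing⟩ := hB
  obtain ⟨hJB, hJC, hJmax⟩ := mem_bmax_restrict hJ
  have hJ1 : J ⊆ I₁ := hJC.trans inter_subset_left
  have hJ2 : J ⊆ I₂ := hJC.trans inter_subset_right
  have hJne : J.Nonempty := (hsub J hJB).2
  have hN₁ : IsNestedSet B (insert I₁ N) := h₁.1
  have hNB : ∀ M ∈ N, M ∈ B := fun M hM => (mem_sdiff.mp (hN.1 hM)).1
  by_contra hJN
  -- Step 1 : J ∉ bmax B
  have hJnb : J ∉ bmax B := by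
    intro h
    exact hJI ((mem_filter.mp h).2 I₁ hI₁ hJ1)
  -- Step 2 : comparability of J with elements of N
  have hcomp : ∀ M ∈ N, J ⊆ M ∨ M ⊆ J ∨ J ∩ M = ∅ := by
    intro M hM
    by_contra hc
    push_neg at hc
    obtain ⟨hJM, hMJ, hJMne⟩ := hc
    have hMB : M ∈ B := hNB M hM
    have hsubI : ∀ I : Finset α, I ∈ B → IsNestedSet B (insert I N) → J ⊆ I → M ⊆ I := by
      intro I hIB hnest hJI'
      rcases hnest.2.1 M (mem_insert_of_mem hM) I (mem_insert_self _ _) with h | h | h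
      · exact h
      · exact absurd (hJI'.trans h) hJM
      · exfalso
        have hsub2 : J ∩ M ⊆ M ∩ I := fun x hx => by
          simp only [mem_inter] at *; exact ⟨hx.2, hJI' hx.1⟩
        rw [h, subset_empty] at hsub2
        exact hJMne.ne_empty hsub2
    have hM1 : M ⊆ I₁ := hsubI I₁ hI₁ hN₁ hJ1
    have hM2 : M ⊆ I₂ := hsubI I₂ hI₂ h₂ hJ2
    have hMJB : M ∪ J ∈ B := by
      refine hclose M hMB J hJB ?_
      rw [inter_comm]
      exact hJMne
    have heq := hJmax (M ∪ J) hMJB (union_subset (subset_inter hM1 hM2) hJC)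
      subset_union_right
    refine hMJ ?_
    rw [heq]
    exact subset_union_left
  -- Step 3 : no antichain in insert J N has union in B
  have hanti : ∀ F ⊆ insert J N, 2 ≤ F.card →
      (∀ A ∈ F, ∀ A' ∈ F, A ≠ A' → A ∩ A' = ∅) → F.sup id ∉ B := by
    intro F hF hcard hdisj hsupB
    by_cases hJF : J ∈ F
    · set F' := F.erase J with hF'def
      have hF'N : F' ⊆ N := by
        intro A hA
        have hAne : A ≠ J := (mem_erase.mp hA).1
        rcases mem_insert.mp (hF (mem_erase.mp hA).2) with h | h
        · exact absurd h hAne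
        · exact h
      have hF'ne : F'.Nonempty := by
        rw [← card_pos, card_erase_of_mem hJF]
        omega
      have hFeq : F = insert J F' := (insert_erase hJF).symm
      have hJF' : J ∉ F' := notMem_erase _ _
      set U := F'.sup id with hU
      have hGB : J ∪ U ∈ B := by
        rwa [hFeq, sup_insert, id_eq, sup_eq_union] at hsupB
      have hMdisjJ : ∀ M ∈ F', M ∩ J = ∅ := fun M hM =>
        hdisj M (mem_erase.mp hM).2 J hJF (mem_erase.mp hM).1
      have key : ∀ I : Finset α, I ∈ B → IsNestedSet B (insert I N) → J ⊆ I →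
          ∀ M ∈ F', M ⊆ I := by
        intro I hIB hnest hJI'
        have hIne : I.Nonempty := (hsub I hIB).2
        have h3a : ∀ M ∈ F', M ⊆ I ∨ M ∩ I = ∅ := by
          intro M hM
          rcases hnest.2.1 M (mem_insert_of_mem (hF'N hM)) I (mem_insert_self _ _)
            with h | h | h
          · exact Or.inl h
          · exfalso
            obtain ⟨x, hx⟩ := hJne
            have hx2 : x ∈ M ∩ J := mem_inter.mpr ⟨h (hJI' hx), hx⟩
            rw [hMdisjJ M hM] at hx2
            exact notMem_empty x hx2
          · exact Or.inr h
        by_contra hnc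
        push_neg at hnc
        set D := F'.filter (fun M => M ∩ I = ∅) with hD
        have hDF' : D ⊆ F' := by rw [hD]; exact filter_subset _ _
        have hDne : D.Nonempty := by
          obtain ⟨M, hM, hMI⟩ := hnc
          refine ⟨M, ?_⟩
          rw [hD]
          exact mem_filter.mpr ⟨hM, (h3a M hM).resolve_left hMI⟩
        have hID : I ∉ D := by
          intro h
          rw [hD] at h
          have h' := (mem_filter.mp h).2
          rw [inter_self] at h'
          exact hIne.ne_empty h'
        have hDU : D.sup id ⊆ U := le_iff_subset.mp (Finset.sup_mono hDF')
        have hUsub : U ⊆ I ∪ D.sup id := by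
          refine le_iff_subset.mp (Finset.sup_le fun M hM => le_iff_subset.mpr ?_)
          rcases h3a M hM with h | h
          · exact h.trans subset_union_left
          · have hMD : M ∈ D := by
              rw [hD]; exact mem_filter.mpr ⟨hM, h⟩
            exact (le_iff_subset.mp (le_sup (f := id) hMD)).trans subset_union_right
        refine hnest.2.2 (insert I D) (insert_subset_insert _ (hDF'.trans hF'N)) ?_ ?_ ?_
        · rw [card_insert_of_notMem hID]
          have := hDne.card_pos
          omega
        · intro A hA A' hA'
          rcases mem_insert.mp hA with rfl | hA <;> rcases mem_insert.mp hA' with h' | hA'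
          · intro hAA'; exact absurd h'.symm hAA'
          · intro _
            rw [hD] at hA'
            rw [inter_comm]
            exact (mem_filter.mp hA').2
          · intro _
            subst h'
            rw [hD] at hA
            exact (mem_filter.mp hA).2
          · exact hdisj A (mem_of_mem_erase (hDF' hA)) A' (mem_of_mem_erase (hDF' hA'))
        · have hsupeq : (insert I D).sup id = I ∪ (J ∪ U) := by
            rw [sup_insert, id_eq, sup_eq_union]
            apply Subset.antisymm
            · exact union_subset subset_union_left
                ((hDU.trans subset_union_right).trans subset_union_right)
            · exact union_subset subset_union_left
                (union_subset (hJI'.trans subset_union_left) hUsub)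
          rw [hsupeq]
          refine hclose I hIB (J ∪ U) hGB ?_
          obtain ⟨x, hx⟩ := hJne
          exact ⟨x, mem_inter.mpr ⟨hJI' hx, mem_union_left _ hx⟩⟩
      have hall1 : ∀ M ∈ F', M ⊆ I₁ := key I₁ hI₁ hN₁ hJ1
      have hall2 : ∀ M ∈ F', M ⊆ I₂ := key I₂ hI₂ h₂ hJ2
      have hsubC : J ∪ U ⊆ I₁ ∩ I₂ := by
        refine union_subset hJC ?_
        exact le_iff_subset.mp (Finset.sup_le fun M hM =>
          le_iff_subset.mpr (subset_inter (hall1 M hM) (hall2 M hM)))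
      have hJeq : J = J ∪ U := hJmax (J ∪ U) hGB hsubC subset_union_left
      obtain ⟨M, hM⟩ := hF'ne
      obtain ⟨x, hx⟩ := (hsub M (hNB M (hF'N hM))).2
      have hxU : x ∈ U := le_iff_subset.mp (le_sup (f := id) hM) hx
      have hxJ : x ∈ J := by
        rw [hJeq]
        exact mem_union_right _ hxU
      have hx2 : x ∈ M ∩ J := mem_inter.mpr ⟨hx, hxJ⟩
      rw [hMdisjJ M hM] at hx2
      exact notMem_empty x hx2
    · have hFN : F ⊆ N := by
        intro A hA
        rcases mem_insert.mp (hF hA) with rfl | h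
        · exact absurd hA hJF
        · exact h
      exact hN.2.2 F hFN hcard hdisj hsupB
  -- Step 4 : insert J (insert I₁ N) is nested, contradicting maximality
  have hnested : IsNestedSet B (insert J (insert I₁ N)) := by
    refine ⟨?_, ?_, ?_⟩
    · exact insert_subset (mem_sdiff.mpr ⟨hJB, hJnb⟩) hN₁.1
    · intro A hA A' hA'
      rcases mem_insert.mp hA with hAJ | hA
      · rcases mem_insert.mp hA' with hA'J | hA'
        · rw [hAJ, hA'J]; exact Or.inl Subset.rfl
        · rcases mem_insert.mp hA' with hA'I | hA'N
          · rw [hAJ, hA'I]; exact Or.inl hJ1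
          · rw [hAJ]; exact hcomp A' hA'N
      · rcases mem_insert.mp hA' with hA'J | hA'
        · rcases mem_insert.mp hA with hAI | hAN
          · rw [hAI, hA'J]; exact Or.inr (Or.inl hJ1)
          · rw [hA'J]
            rcases hcomp A hAN with h | h | h
            · exact Or.inr (Or.inl h)
            · exact Or.inl h
            · exact Or.inr (Or.inr (by rwa [inter_comm]))
        · exact hN₁.2.1 A hA A' hA'
    · intro F hF hcard hdisj
      by_cases hJF : J ∈ F
      · by_cases hI₁F : I₁ ∈ F
        · intro _
          have hd := hdisj J hJF I₁ hI₁F hJI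
          obtain ⟨x, hx⟩ := hJne
          have hx2 : x ∈ J ∩ I₁ := mem_inter.mpr ⟨hx, hJ1 hx⟩
          rw [hd] at hx2
          exact notMem_empty x hx2
        · refine hanti F ?_ hcard hdisj
          intro A hA
          rcases mem_insert.mp (hF hA) with rfl | h
          · exact mem_insert_self _ _
          · rcases mem_insert.mp h with rfl | h
            · exact absurd hA hI₁F
            · exact mem_insert_of_mem h
      · refine hN₁.2.2 F ?_ hcard hdisj
        intro A hA
        rcases mem_insert.mp (hF hA) with rfl | h
        · exact absurd hA hJF
        · exact h
  have heq := h₁.2 _ hnested (subset_insert _ _)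
  have hJmem : J ∈ insert I₁ N := by rw [heq]; exact mem_insert_self _ _
  rcases mem_insert.mp hJmem with h | h
  · exact hJI h
  · exact hJN h

/-- Proposition 4.5 (2) of Zelevinsky: if `N ∪ {I₁}` and `N ∪ {I₂}` are maximal
nested sets and `I₁ ∩ I₂ ≠ ∅`, then every maximal element of `B|_{I₁ ∩ I₂}`
belongs to `N`. -/
theorem maxNested_pair_bmax_restrict_subset
    (S : Finset α) (B : Finset (Finset α)) (hB : IsBuildingSet S B)
    (I₁ I₂ : Finset α) (hI₁ : I₁ ∈ B) (hI₂ : I₂ ∈ B) (hne : I₁ ≠ I₂)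
    (hint : (I₁ ∩ I₂).Nonempty)
    (N : Finset (Finset α)) (hN : IsNestedSet B N)
    (hI₁N : I₁ ∉ N) (hI₂N : I₂ ∉ N)
    (h₁ : IsMaxNestedSet B (insert I₁ N)) (h₂ : IsMaxNestedSet B (insert I₂ N)) :
    bmax (restrict B (I₁ ∩ I₂)) ⊆ N := by
  intro J hJ
  by_cases hJ1 : J = I₁
  · have hJ' : J ∈ bmax (_root_.restrict B (I₂ ∩ I₁)) := by
      rwa [inter_comm I₁ I₂] at hJ
    have hJ2 : J ≠ I₂ := fun h => hne (hJ1.symm.trans h)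
    exact nested_aux hB hI₂ hI₁ hN h₂ h₁.1 hJ' hJ2
  · exact nested_aux hB hI₁ hI₂ hN h₁ h₂.1 hJ hJ1
end

section
/- Let B be a building set on S, let I_1, I_2 ∈ B be distinct, and let N be a nested set such that both N ∪ {I_1} and N ∪ {I_2} are maximal nested sets of B. Then there exists a (possibly empty) family {I_3, ..., I_k} ⊆ N such that I_1 ∪ I_2, I_3, ..., I_k are pairwise disjoint and I_1 ∪ I_2 ∪ I_3 ∪ ... ∪ I_k ∈ N ∪ B_max. -/
open Finset

variable {α : Type*} [DecidableEq α]

/-- Helper: extending a pairwise disjoint family by a set disjoint from all members. -/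
lemma pair_ins {a : Finset α} {s : Finset (Finset α)}
    (h1 : ∀ J ∈ s, a ∩ J = ∅)
    (h2 : ∀ I ∈ s, ∀ J ∈ s, I ≠ J → I ∩ J = ∅) :
    ∀ I ∈ insert a s, ∀ J ∈ insert a s, I ≠ J → I ∩ J = ∅ := by
  intro I hI J hJ hne
  rcases Finset.mem_insert.mp hI with h | hI' <;> rcases Finset.mem_insert.mp hJ with h' | hJ'
  · exact absurd (h.trans h'.symm) hne
  · rw [h]; exact h1 J hJ'
  · rw [h', Finset.inter_comm]; exact h1 I hI'
  · exact h2 I hI' J hJ' hne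

/-- Helper: if `C ⊆ J` and `D ∩ J = ∅` then `C ∩ D = ∅`. -/
lemma inter_empty_of_subset_left {C D J : Finset α} (hCJ : C ⊆ J) (hDJ : D ∩ J = ∅) :
    C ∩ D = ∅ := by
  rw [Finset.eq_empty_iff_forall_notMem]
  intro x hx
  obtain ⟨h1, h2⟩ := Finset.mem_inter.mp hx
  exact Finset.notMem_empty x (hDJ ▸ Finset.mem_inter.mpr ⟨h2, hCJ h1⟩)

/-- Helper: split an empty intersection with a union. -/
lemma split_inter {A C D : Finset α} (h : (A ∪ C) ∩ D = ∅) : A ∩ D = ∅ ∧ C ∩ D = ∅ := by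
  rw [Finset.union_inter_distrib_right, Finset.union_eq_empty] at h
  exact h

/-- Proposition 4.5 (3) of Zelevinsky: there is a (possibly empty) family
`{I₃, …, I_k} ⊆ N` such that `I₁ ∪ I₂, I₃, …, I_k` are pairwise disjoint and
`I₁ ∪ I₂ ∪ I₃ ∪ ⋯ ∪ I_k ∈ N ∪ B_max`. -/
theorem maxNested_pair_exists_family
    (S : Finset α) (B : Finset (Finset α)) (hB : IsBuildingSet S B)
    (I₁ I₂ : Finset α) (hI₁ : I₁ ∈ B) (hI₂ : I₂ ∈ B) (hne : I₁ ≠ I₂)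
    (N : Finset (Finset α)) (hN : IsNestedSet B N)
    (hI₁N : I₁ ∉ N) (hI₂N : I₂ ∉ N)
    (h₁ : IsMaxNestedSet B (insert I₁ N)) (h₂ : IsMaxNestedSet B (insert I₂ N)) :
    ∃ F ⊆ N, (∀ J ∈ F, (I₁ ∪ I₂) ∩ J = ∅) ∧
      (∀ J ∈ F, ∀ J' ∈ F, J ≠ J' → J ∩ J' = ∅) ∧
      (I₁ ∪ I₂) ∪ F.sup id ∈ N ∪ bmax B := by
  classical
  obtain ⟨hS, hsub, hunion, hsingle⟩ := hB
  obtain ⟨hN1, hN2, hN3⟩ := hN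
  have hI₁B' : I₁ ∈ B \ bmax B := h₁.1.1 (mem_insert_self _ _)
  have hI₂B' : I₂ ∈ B \ bmax B := h₂.1.1 (mem_insert_self _ _)
  have hNE : ∀ I ∈ B, I.Nonempty := fun I hI => (hsub I hI).2
  have hNB : ∀ K ∈ N, K ∈ B := fun K hK => (mem_sdiff.mp (hN1 hK)).1
  -- Step 1: `insert I₁ (insert I₂ N)` is not nested.
  have hnn : ¬ IsNestedSet B (insert I₁ (insert I₂ N)) := by
    intro h
    have heq := h₂.2 _ h (subset_insert _ _)
    have hmem : I₁ ∈ insert I₂ N := heq ▸ mem_insert_self I₁ (insert I₂ N)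
    rcases mem_insert.mp hmem with h' | h'
    · exact hne h'
    · exact hI₁N h'
  -- Any bad disjoint family must contain both `I₁` and `I₂`.
  have hboth : ∀ F', F' ⊆ insert I₁ (insert I₂ N) → 2 ≤ F'.card →
      (∀ I ∈ F', ∀ J ∈ F', I ≠ J → I ∩ J = ∅) → F'.sup id ∈ B → I₁ ∈ F' ∧ I₂ ∈ F' := by
    intro F' hs hc hp hsup
    constructor
    · by_contra hmem
      have hss : F' ⊆ insert I₂ N := by
        intro x hx
        rcases mem_insert.mp (hs hx) with rfl | h'
        · exact absurd hx hmem
        · exact h'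
      exact h₂.1.2.2 F' hss hc hp hsup
    · by_contra hmem
      have hss : F' ⊆ insert I₁ N := by
        intro x hx
        rcases mem_insert.mp (hs hx) with rfl | h'
        · exact mem_insert_self _ _
        rcases mem_insert.mp h' with rfl | h''
        · exact absurd hx hmem
        · exact mem_insert_of_mem h''
      exact h₁.1.2.2 F' hss hc hp hsup
  -- If `I₁, I₂` are comparable or disjoint, a bad family exists.
  have hfam : (I₁ ⊆ I₂ ∨ I₂ ⊆ I₁ ∨ I₁ ∩ I₂ = ∅) →
      ∃ F', F' ⊆ insert I₁ (insert I₂ N) ∧ 2 ≤ F'.card ∧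
        (∀ I ∈ F', ∀ J ∈ F', I ≠ J → I ∩ J = ∅) ∧ F'.sup id ∈ B := by
    intro hp
    by_contra h
    push_neg at h
    apply hnn
    refine ⟨?_, ?_, ?_⟩
    · intro K hK
      rcases mem_insert.mp hK with rfl | hK
      · exact hI₁B'
      rcases mem_insert.mp hK with rfl | hK
      · exact hI₂B'
      · exact hN1 hK
    · intro K hK L hL
      rcases mem_insert.mp hK with eK | hK
      · rw [eK]
        rcases mem_insert.mp hL with eL | hL
        · rw [eL]; exact Or.inl (Subset.refl _)
        rcases mem_insert.mp hL with eL | hL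
        · rw [eL]; exact hp
        · exact h₁.1.2.1 I₁ (mem_insert_self _ _) L (mem_insert_of_mem hL)
      rcases mem_insert.mp hK with eK | hK
      · rw [eK]
        rcases mem_insert.mp hL with eL | hL
        · rw [eL]
          rcases hp with h' | h' | h'
          · exact Or.inr (Or.inl h')
          · exact Or.inl h'
          · exact Or.inr (Or.inr (by rw [inter_comm]; exact h'))
        rcases mem_insert.mp hL with eL | hL
        · rw [eL]; exact Or.inl (Subset.refl _)
        · exact h₂.1.2.1 I₂ (mem_insert_self _ _) L (mem_insert_of_mem hL)
      · rcases mem_insert.mp hL with eL | hL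
        · rw [eL]; exact h₁.1.2.1 K (mem_insert_of_mem hK) I₁ (mem_insert_self _ _)
        rcases mem_insert.mp hL with eL | hL
        · rw [eL]; exact h₂.1.2.1 K (mem_insert_of_mem hK) I₂ (mem_insert_self _ _)
        · exact hN2 K hK L hL
    · intro F' hs hc hp'
      exact h F' hs hc hp'
  -- `¬ I₂ ⊆ I₁`.
  have hns2 : ¬ I₂ ⊆ I₁ := by
    intro hsub'
    obtain ⟨F', hFs, hFc, hFp, hFsup⟩ := hfam (Or.inr (Or.inl hsub'))
    obtain ⟨m1, m2⟩ := hboth F' hFs hFc hFp hFsup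
    have h12 : I₁ ∩ I₂ = ∅ := hFp I₁ m1 I₂ m2 hne
    obtain ⟨x, hx⟩ := hNE I₂ hI₂
    have hxx : x ∈ I₁ ∩ I₂ := mem_inter.mpr ⟨hsub' hx, hx⟩
    rw [h12] at hxx
    exact notMem_empty x hxx
  -- The collection `M` of candidate maximal unions.
  set M : Finset (Finset α) := B.filter (fun J => ∃ F, F ⊆ N ∧
      (∀ C ∈ F, (I₁ ∪ I₂) ∩ C = ∅) ∧
      (∀ C ∈ F, ∀ D ∈ F, C ≠ D → C ∩ D = ∅) ∧ J = (I₁ ∪ I₂) ∪ F.sup id) with hMdef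
  -- `M` is nonempty.
  have hMne : M.Nonempty := by
    by_cases hd : (I₁ ∩ I₂).Nonempty
    · exact ⟨I₁ ∪ I₂, mem_filter.mpr ⟨hunion I₁ hI₁ I₂ hI₂ hd, ∅, empty_subset _,
        fun C hC => absurd hC (notMem_empty C), fun C hC => absurd hC (notMem_empty C),
        by simp⟩⟩
    · rw [not_nonempty_iff_eq_empty] at hd
      obtain ⟨F', hFs, hFc, hFp, hFsup⟩ := hfam (Or.inr (Or.inr hd))
      obtain ⟨m1, m2⟩ := hboth F' hFs hFc hFp hFsup
      set G₀ := (F'.erase I₁).erase I₂ with hG₀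
      have hG₀mem : ∀ x ∈ G₀, x ≠ I₁ ∧ x ≠ I₂ ∧ x ∈ F' := by
        intro x hx
        have hx2 : x ≠ I₂ := (mem_erase.mp hx).1
        have hx1 : x ≠ I₁ := (mem_erase.mp (mem_erase.mp hx).2).1
        exact ⟨hx1, hx2, (mem_erase.mp (mem_erase.mp hx).2).2⟩
      have hG₀N : G₀ ⊆ N := by
        intro x hx
        obtain ⟨hx1, hx2, hxF⟩ := hG₀mem x hx
        rcases mem_insert.mp (hFs hxF) with h | h
        · exact absurd h hx1
        rcases mem_insert.mp h with h | h
        · exact absurd h hx2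
        · exact h
      refine ⟨F'.sup id, mem_filter.mpr ⟨hFsup, G₀, hG₀N, ?_, ?_, ?_⟩⟩
      · intro C hC
        obtain ⟨hC1, hC2, hCF⟩ := hG₀mem C hC
        have e1 : I₁ ∩ C = ∅ := hFp I₁ m1 C hCF (Ne.symm hC1)
        have e2 : I₂ ∩ C = ∅ := hFp I₂ m2 C hCF (Ne.symm hC2)
        rw [union_inter_distrib_right, e1, e2, union_empty]
      · intro C hC D hD hne'
        exact hFp C (hG₀mem C hC).2.2 D (hG₀mem D hD).2.2 hne'
      · apply Subset.antisymm
        · intro x hx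
          obtain ⟨C, hC, hxC⟩ := mem_sup.mp hx
          by_cases e1 : C = I₁
          · exact mem_union_left _ (mem_union_left _ (e1 ▸ hxC))
          by_cases e2 : C = I₂
          · exact mem_union_left _ (mem_union_right _ (e2 ▸ hxC))
          · exact mem_union_right _
              (mem_sup.mpr ⟨C, mem_erase.mpr ⟨e2, mem_erase.mpr ⟨e1, hC⟩⟩, hxC⟩)
        · intro x hx
          rcases mem_union.mp hx with hx | hx
          · rcases mem_union.mp hx with hx | hx
            · exact mem_sup.mpr ⟨I₁, m1, hx⟩
            · exact mem_sup.mpr ⟨I₂, m2, hx⟩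
          · obtain ⟨C, hC, hxC⟩ := mem_sup.mp hx
            exact mem_sup.mpr ⟨C, (hG₀mem C hC).2.2, hxC⟩
  -- Pick a maximal element `J` of `M`.
  obtain ⟨J, hJM, hJmax⟩ := M.exists_maximal hMne
  obtain ⟨hJB, F, hFN, hFdisj, hFpair, hJeq⟩ := mem_filter.mp hJM
  have hI₁J : I₁ ⊆ J := by
    rw [hJeq]; exact fun x hx => mem_union_left _ (mem_union_left _ hx)
  have hI₂J : I₂ ⊆ J := by
    rw [hJeq]; exact fun x hx => mem_union_left _ (mem_union_right _ hx)
  have hFJ : ∀ C ∈ F, C ⊆ J := by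
    intro C hC x hx
    rw [hJeq]; exact mem_union_right _ (mem_sup.mpr ⟨C, hC, hx⟩)
  refine ⟨F, hFN, hFdisj, hFpair, ?_⟩
  rw [← hJeq]
  by_contra hJnm
  have hJN : J ∉ N := fun h => hJnm (mem_union_left _ h)
  have hJbm : J ∉ bmax B := fun h => hJnm (mem_union_right _ h)
  have hneI₁J : I₁ ≠ J := by
    intro e
    exact hns2 (e ▸ hI₂J)
  -- Key comparability lemma: every `K ∈ N` is comparable with or disjoint from `J`.
  have hKJ : ∀ K ∈ N, K ⊆ J ∨ J ⊆ K ∨ K ∩ J = ∅ := by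
    intro K hK
    by_contra hcon
    push_neg at hcon
    obtain ⟨hKJ', hJK', hKJne⟩ := hcon
    have hKB : K ∈ B := hNB K hK
    have hKne : K.Nonempty := hNE K hKB
    have hK1 : I₁ ⊆ K ∨ K ∩ I₁ = ∅ := by
      rcases h₁.1.2.1 I₁ (mem_insert_self _ _) K (mem_insert_of_mem hK) with h | h | h
      · exact Or.inl h
      · exact absurd (h.trans hI₁J) hKJ'
      · exact Or.inr (by rw [inter_comm]; exact h)
    have hK2 : I₂ ⊆ K ∨ K ∩ I₂ = ∅ := by
      rcases h₂.1.2.1 I₂ (mem_insert_self _ _) K (mem_insert_of_mem hK) with h | h | h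
      · exact Or.inl h
      · exact absurd (h.trans hI₂J) hKJ'
      · exact Or.inr (by rw [inter_comm]; exact h)
    set Gd := F.filter (fun C => C ∩ K = ∅) with hGddef
    have hGdmem : ∀ {C : Finset α}, C ∈ Gd ↔ C ∈ F ∧ C ∩ K = ∅ := by
      intro C; rw [hGddef]; exact mem_filter
    have hGdF : Gd ⊆ F := fun C hC => (hGdmem.mp hC).1
    have hGdN : Gd ⊆ N := hGdF.trans hFN
    have hGdK : ∀ C ∈ Gd, C ∩ K = ∅ := fun C hC => (hGdmem.mp hC).2
    have hGdK' : ∀ C ∈ Gd, K ∩ C = ∅ := fun C hC => by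
      rw [inter_comm]; exact hGdK C hC
    have hCK : ∀ C ∈ F, C ∉ Gd → C ⊆ K := by
      intro C hC hCG
      rcases hN2 C (hFN hC) K hK with h | h | h
      · exact h
      · exact absurd (h.trans (hFJ C hC)) hKJ'
      · exact absurd (hGdmem.mpr ⟨hC, h⟩) hCG
    have hKGd : K ∉ Gd := by
      intro h
      have h0 := hGdK K h
      rw [inter_self] at h0
      exact hKne.ne_empty h0
    have hGdpair : ∀ C ∈ Gd, ∀ D ∈ Gd, C ≠ D → C ∩ D = ∅ :=
      fun C hC D hD => hFpair C (hGdF hC) D (hGdF hD)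
    have hGddisj : ∀ C ∈ Gd, (I₁ ∪ I₂) ∩ C = ∅ := fun C hC => hFdisj C (hGdF hC)
    have hmaster : ∀ x ∈ J, x ∈ I₁ ∨ x ∈ I₂ ∨ x ∈ K ∨ x ∈ Gd.sup id := by
      intro x hx
      rw [hJeq] at hx
      rcases mem_union.mp hx with hx | hx
      · rcases mem_union.mp hx with hx | hx
        · exact Or.inl hx
        · exact Or.inr (Or.inl hx)
      · obtain ⟨C, hC, hxC⟩ := mem_sup.mp hx
        by_cases hCG : C ∈ Gd
        · exact Or.inr (Or.inr (Or.inr (mem_sup.mpr ⟨C, hCG, hxC⟩)))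
        · exact Or.inr (Or.inr (Or.inl (hCK C hC hCG hxC)))
    have hGdJ : Gd.sup id ⊆ J := by
      intro x hx
      obtain ⟨C, hC, hxC⟩ := mem_sup.mp hx
      exact hFJ C (hGdF hC) hxC
    have hneKGd : ∀ C ∈ Gd, K ≠ C := by
      intro C hC e
      have h0 := hGdK C hC
      rw [← e, inter_self] at h0
      exact hKne.ne_empty h0
    rcases hK1 with h1 | h1 <;> rcases hK2 with h2 | h2
    · -- Case: `I₁ ⊆ K` and `I₂ ⊆ K`.
      obtain ⟨x, hxJ, hxK⟩ := not_subset.mp hJK'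
      have hxG : x ∈ Gd.sup id := by
        rcases hmaster x hxJ with h | h | h | h
        · exact absurd (h1 h) hxK
        · exact absurd (h2 h) hxK
        · exact absurd h hxK
        · exact h
      obtain ⟨C₀, hC₀, hxC₀⟩ := mem_sup.mp hxG
      have hsupeq : (insert K Gd).sup id = K ∪ J := by
        rw [sup_insert]
        simp only [id_eq, sup_eq_union]
        apply Subset.antisymm
        · exact union_subset subset_union_left (hGdJ.trans subset_union_right)
        · intro y hy
          rcases mem_union.mp hy with hy | hy
          · exact mem_union_left _ hy
          · rcases hmaster y hy with h | h | h | h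
            · exact mem_union_left _ (h1 h)
            · exact mem_union_left _ (h2 h)
            · exact mem_union_left _ h
            · exact mem_union_right _ h
      refine hN3 (insert K Gd) (insert_subset_iff.mpr ⟨hK, hGdN⟩) ?_
        (pair_ins hGdK' hGdpair) ?_
      · exact one_lt_card.mpr ⟨K, mem_insert_self _ _, C₀, mem_insert_of_mem hC₀,
          hneKGd C₀ hC₀⟩
      · rw [hsupeq]
        apply hunion K hKB J hJB
        obtain ⟨y, hy⟩ := hNE I₁ hI₁
        exact ⟨y, mem_inter.mpr ⟨h1 hy, hI₁J hy⟩⟩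
    · -- Case: `I₁ ⊆ K` and `K ∩ I₂ = ∅`.
      have hI₂mem : I₂ ∉ insert K Gd := by
        intro h
        rcases mem_insert.mp h with e | h
        · rw [← e, inter_self] at h2
          exact (hNE I₂ hI₂).ne_empty h2
        · exact hI₂N (hGdN h)
      have hsupeq : (insert I₂ (insert K Gd)).sup id = K ∪ J := by
        rw [sup_insert, sup_insert]
        simp only [id_eq, sup_eq_union]
        apply Subset.antisymm
        · refine union_subset (hI₂J.trans subset_union_right)
            (union_subset subset_union_left (hGdJ.trans subset_union_right))
        · intro y hy
          rcases mem_union.mp hy with hy | hy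
          · exact mem_union_right _ (mem_union_left _ hy)
          · rcases hmaster y hy with h | h | h | h
            · exact mem_union_right _ (mem_union_left _ (h1 h))
            · exact mem_union_left _ h
            · exact mem_union_right _ (mem_union_left _ h)
            · exact mem_union_right _ (mem_union_right _ h)
      refine h₂.1.2.2 (insert I₂ (insert K Gd)) ?_ ?_ ?_ ?_
      · refine insert_subset_iff.mpr ⟨mem_insert_self _ _,
          insert_subset_iff.mpr ⟨mem_insert_of_mem hK, fun x hx => mem_insert_of_mem (hGdN hx)⟩⟩
      · refine one_lt_card.mpr ⟨I₂, mem_insert_self _ _, K,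
          mem_insert_of_mem (mem_insert_self _ _), ?_⟩
        intro e
        rw [e, inter_self] at h2
        exact hKne.ne_empty h2
      · refine pair_ins ?_ (pair_ins hGdK' hGdpair)
        intro C hC
        rcases mem_insert.mp hC with rfl | hC
        · rw [inter_comm]; exact h2
        · exact (split_inter (hGddisj C hC)).2
      · rw [hsupeq]
        apply hunion K hKB J hJB
        obtain ⟨y, hy⟩ := hNE I₁ hI₁
        exact ⟨y, mem_inter.mpr ⟨h1 hy, hI₁J hy⟩⟩
    · -- Case: `K ∩ I₁ = ∅` and `I₂ ⊆ K`.
      have hsupeq : (insert I₁ (insert K Gd)).sup id = K ∪ J := by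
        rw [sup_insert, sup_insert]
        simp only [id_eq, sup_eq_union]
        apply Subset.antisymm
        · refine union_subset (hI₁J.trans subset_union_right)
            (union_subset subset_union_left (hGdJ.trans subset_union_right))
        · intro y hy
          rcases mem_union.mp hy with hy | hy
          · exact mem_union_right _ (mem_union_left _ hy)
          · rcases hmaster y hy with h | h | h | h
            · exact mem_union_left _ h
            · exact mem_union_right _ (mem_union_left _ (h2 h))
            · exact mem_union_right _ (mem_union_left _ h)
            · exact mem_union_right _ (mem_union_right _ h)
      refine h₁.1.2.2 (insert I₁ (insert K Gd)) ?_ ?_ ?_ ?_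
      · refine insert_subset_iff.mpr ⟨mem_insert_self _ _,
          insert_subset_iff.mpr ⟨mem_insert_of_mem hK, fun x hx => mem_insert_of_mem (hGdN hx)⟩⟩
      · refine one_lt_card.mpr ⟨I₁, mem_insert_self _ _, K,
          mem_insert_of_mem (mem_insert_self _ _), ?_⟩
        intro e
        rw [e, inter_self] at h1
        exact hKne.ne_empty h1
      · refine pair_ins ?_ (pair_ins hGdK' hGdpair)
        intro C hC
        rcases mem_insert.mp hC with rfl | hC
        · rw [inter_comm]; exact h1
        · exact (split_inter (hGddisj C hC)).1
      · rw [hsupeq]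
        apply hunion K hKB J hJB
        obtain ⟨y, hy⟩ := hNE I₂ hI₂
        exact ⟨y, mem_inter.mpr ⟨h2 hy, hI₂J hy⟩⟩
    · -- Case: `K ∩ I₁ = ∅` and `K ∩ I₂ = ∅`.
      have hKJB : K ∪ J ∈ B := hunion K hKB J hJB hKJne
      have hKmem : K ∪ J ∈ M := by
        refine mem_filter.mpr ⟨hKJB, insert K Gd, insert_subset_iff.mpr ⟨hK, hGdN⟩,
          ?_, pair_ins hGdK' hGdpair, ?_⟩
        · intro C hC
          rcases mem_insert.mp hC with rfl | hC
          · rw [union_inter_distrib_right]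
            rw [inter_comm] at h1 h2
            rw [h1, h2, union_empty]
          · exact hGddisj C hC
        · rw [sup_insert]
          simp only [id_eq, sup_eq_union]
          apply Subset.antisymm
          · intro y hy
            rcases mem_union.mp hy with hy | hy
            · exact mem_union_right _ (mem_union_left _ hy)
            · rcases hmaster y hy with h | h | h | h
              · exact mem_union_left _ (mem_union_left _ h)
              · exact mem_union_left _ (mem_union_right _ h)
              · exact mem_union_right _ (mem_union_left _ h)
              · exact mem_union_right _ (mem_union_right _ h)
          · intro y hy
            rcases mem_union.mp hy with hy | hy
            · rcases mem_union.mp hy with hy | hy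
              · exact mem_union_right _ (hI₁J hy)
              · exact mem_union_right _ (hI₂J hy)
            · rcases mem_union.mp hy with hy | hy
              · exact mem_union_left _ hy
              · exact mem_union_right _ (hGdJ hy)
      have hss : J ⊂ K ∪ J := by
        rw [ssubset_def]
        refine ⟨subset_union_right, ?_⟩
        intro hcon'
        obtain ⟨x, hxK, hxJ⟩ := not_subset.mp hKJ'
        exact hxJ (hcon' (mem_union_left _ hxK))
      exact (ssubset_def.mp hss).2 (hJmax hKmem (ssubset_def.mp hss).1)
  -- Build the nested set `insert J (insert I₁ N)` — contradiction with maximality.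
  have hnest : IsNestedSet B (insert J (insert I₁ N)) := by
    refine ⟨?_, ?_, ?_⟩
    · intro K hK
      rcases mem_insert.mp hK with rfl | hK
      · exact mem_sdiff.mpr ⟨hJB, hJbm⟩
      · exact h₁.1.1 hK
    · intro K hK L hL
      rcases mem_insert.mp hK with eK | hK
      · rw [eK]
        rcases mem_insert.mp hL with eL | hL
        · rw [eL]; exact Or.inl (Subset.refl _)
        rcases mem_insert.mp hL with eL | hL
        · rw [eL]; exact Or.inr (Or.inl hI₁J)
        · rcases hKJ L hL with h | h | h
          · exact Or.inr (Or.inl h)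
          · exact Or.inl h
          · exact Or.inr (Or.inr (by rw [inter_comm]; exact h))
      · rcases mem_insert.mp hL with eL | hL
        · rw [eL]
          rcases mem_insert.mp hK with eK | hK'
          · rw [eK]; exact Or.inl hI₁J
          · exact hKJ K hK'
        · exact h₁.1.2.1 K hK L hL
    · intro F' hsub' hcard hpair hsupB
      have hJF' : J ∈ F' := by
        by_contra hh
        have hss : F' ⊆ insert I₁ N := by
          intro x hx
          rcases mem_insert.mp (hsub' hx) with rfl | h
          · exact absurd hx hh
          · exact h
        exact h₁.1.2.2 F' hss hcard hpair hsupB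
      have hG'N : F'.erase J ⊆ N := by
        intro x hx
        have hx1 := (mem_erase.mp hx).1
        have hx2 := (mem_erase.mp hx).2
        rcases mem_insert.mp (hsub' hx2) with e | h
        · exact absurd e hx1
        rcases mem_insert.mp h with e | h
        · exfalso
          have h0 := hpair x hx2 J hJF' hx1
          obtain ⟨y, hy⟩ := hNE I₁ hI₁
          have hyx : y ∈ x := by rw [e]; exact hy
          have hy2 : y ∈ x ∩ J := mem_inter.mpr ⟨hyx, hI₁J hy⟩
          rw [h0] at hy2
          exact notMem_empty y hy2
        · exact h
      have hdisjJ : ∀ C ∈ F'.erase J, C ∩ J = ∅ := fun C hC =>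
        hpair C (mem_erase.mp hC).2 J hJF' (mem_erase.mp hC).1
      have hGne : (F'.erase J).Nonempty := by
        rw [← card_pos, card_erase_of_mem hJF']
        omega
      obtain ⟨C₀, hC₀⟩ := hGne
      have hsupEq : F'.sup id = (I₁ ∪ I₂) ∪ (F ∪ F'.erase J).sup id := by
        apply Subset.antisymm
        · intro x hx
          obtain ⟨C, hC, hxC⟩ := mem_sup.mp hx
          by_cases e : C = J
          · subst e
            have hxJ' := hxC
            rw [hJeq] at hxJ'
            rcases mem_union.mp hxJ' with h | h
            · exact mem_union_left _ h
            · obtain ⟨D, hD, hxD⟩ := mem_sup.mp h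
              exact mem_union_right _ (mem_sup.mpr ⟨D, mem_union_left _ hD, hxD⟩)
          · exact mem_union_right _
              (mem_sup.mpr ⟨C, mem_union_right _ (mem_erase.mpr ⟨e, hC⟩), hxC⟩)
        · intro x hx
          rcases mem_union.mp hx with hx | hx
          · refine mem_sup.mpr ⟨J, hJF', ?_⟩
            rw [hJeq]; exact mem_union_left _ hx
          · obtain ⟨C, hC, hxC⟩ := mem_sup.mp hx
            rcases mem_union.mp hC with hC | hC
            · refine mem_sup.mpr ⟨J, hJF', ?_⟩
              rw [hJeq]; exact mem_union_right _ (mem_sup.mpr ⟨C, hC, hxC⟩)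
            · exact mem_sup.mpr ⟨C, (mem_erase.mp hC).2, hxC⟩
      have hmemM : F'.sup id ∈ M := by
        refine mem_filter.mpr ⟨hsupB, F ∪ F'.erase J, union_subset hFN hG'N, ?_, ?_, hsupEq⟩
        · intro C hC
          rcases mem_union.mp hC with hC | hC
          · exact hFdisj C hC
          · have h0 := hdisjJ C hC
            rw [eq_empty_iff_forall_notMem]
            intro x hx
            obtain ⟨ha, hb⟩ := mem_inter.mp hx
            have hxJ : x ∈ J := by
              rw [hJeq]; exact mem_union_left _ ha
            exact notMem_empty x (h0 ▸ mem_inter.mpr ⟨hb, hxJ⟩)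
        · intro C hC D hD hne'
          rcases mem_union.mp hC with hC | hC <;> rcases mem_union.mp hD with hD | hD
          · exact hFpair C hC D hD hne'
          · exact inter_empty_of_subset_left (hFJ C hC) (hdisjJ D hD)
          · rw [inter_comm]
            exact inter_empty_of_subset_left (hFJ D hD) (hdisjJ C hC)
          · exact hpair C (mem_erase.mp hC).2 D (mem_erase.mp hD).2 hne'
      have hss : J ⊂ F'.sup id := by
        rw [ssubset_def]
        constructor
        · intro x hx
          exact mem_sup.mpr ⟨J, hJF', hx⟩
        · intro hcon'
          obtain ⟨y, hy⟩ := hNE C₀ (hNB C₀ (hG'N hC₀))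
          have hyJ : y ∉ J := fun h =>
            notMem_empty y ((hdisjJ C₀ hC₀) ▸ mem_inter.mpr ⟨hy, h⟩)
          exact hyJ (hcon' (mem_sup.mpr ⟨C₀, (mem_erase.mp hC₀).2, hy⟩))
      exact (ssubset_def.mp hss).2 (hJmax hmemM (ssubset_def.mp hss).1)
  have heq := h₁.2 _ hnest (subset_insert _ _)
  have hmem : J ∈ insert I₁ N := heq ▸ mem_insert_self J (insert I₁ N)
  rcases mem_insert.mp hmem with h | h
  · exact hneI₁J h.symm
  · exact hJN h
end

section
/- Let B be a connected building set on S whose associated toric variety is Fano, in the sense that for all I_1, I_2 ∈ B with I_1 ∩ I_2 ≠ ∅, I_1 ⊄ I_2 and I_2 ⊄ I_1, one has I_1 ∪ I_2 = S and I_1 ∩ I_2 ∈ B. Let I_1, I_2 ∈ B be distinct with I_1 ∩ I_2 ≠ ∅ and let N be a nested set with N ∪ {I_1} and N ∪ {I_2} both maximal nested sets. Then I_1 ∪ I_2 = S, I_1 ∩ I_2 ∈ B, and I_1 ∩ I_2 ∈ N. -/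
open Finset

variable {α : Type*} [DecidableEq α]

/-- For a connected building set satisfying the Fano condition, the wall relation
data: `I₁ ∪ I₂ = S`, `I₁ ∩ I₂ ∈ B` and `I₁ ∩ I₂ ∈ N`. -/
theorem fano_wall_relation
    (S : Finset α) (B : Finset (Finset α)) (hB : IsBuildingSet S B)
    (hconn : bmax B = {S})
    (hfano : ∀ I₁ ∈ B, ∀ I₂ ∈ B, (I₁ ∩ I₂).Nonempty → ¬I₁ ⊆ I₂ → ¬I₂ ⊆ I₁ →
      I₁ ∪ I₂ = S ∧ I₁ ∩ I₂ ∈ B)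
    (I₁ I₂ : Finset α) (hI₁ : I₁ ∈ B) (hI₂ : I₂ ∈ B) (hne : I₁ ≠ I₂)
    (hint : (I₁ ∩ I₂).Nonempty)
    (N : Finset (Finset α)) (hN : IsNestedSet B N)
    (hI₁N : I₁ ∉ N) (hI₂N : I₂ ∉ N)
    (h₁ : IsMaxNestedSet B (insert I₁ N)) (h₂ : IsMaxNestedSet B (insert I₂ N)) :
    I₁ ∪ I₂ = S ∧ I₁ ∩ I₂ ∈ B ∧ I₁ ∩ I₂ ∈ N := by
  obtain ⟨hSne, hsub, hunion, hsingle⟩ := hB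
  obtain ⟨hN1, hN2, hN3⟩ := hN
  obtain ⟨⟨hM1a, hM1b, hM1c⟩, hM1max⟩ := h₁
  obtain ⟨⟨hM2a, hM2b, hM2c⟩, hM2max⟩ := h₂
  classical
  -- Step 1: I₁ and I₂ are incomparable
  have hkey : ¬(I₁ ⊆ I₂ ∨ I₂ ⊆ I₁) := by
    intro hss
    have hnested : IsNestedSet B (insert I₂ (insert I₁ N)) := by
      refine ⟨?_, ?_, ?_⟩
      · intro K hK
        rcases mem_insert.1 hK with rfl | hK
        · exact hM2a (mem_insert_self _ _)
        · exact hM1a hK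
      · have hcomp2 : ∀ K ∈ insert I₁ N, I₂ ⊆ K ∨ K ⊆ I₂ ∨ I₂ ∩ K = ∅ := by
          intro K hK
          rcases mem_insert.1 hK with hKe | hK'
          · rw [hKe]
            rcases hss with h | h
            · exact Or.inr (Or.inl h)
            · exact Or.inl h
          · rcases hM2b I₂ (mem_insert_self _ _) K (mem_insert_of_mem hK') with h | h | h
            · exact Or.inl h
            · exact Or.inr (Or.inl h)
            · exact Or.inr (Or.inr h)
        intro I hI K hK
        rcases mem_insert.1 hI with hIe | hI'
        · rcases mem_insert.1 hK with hKe | hK'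
          · rw [hIe, hKe]
            exact Or.inl Subset.rfl
          · rw [hIe]
            exact hcomp2 K hK'
        · rcases mem_insert.1 hK with hKe | hK'
          · rw [hKe]
            rcases hcomp2 I hI' with h | h | h
            · exact Or.inr (Or.inl h)
            · exact Or.inl h
            · exact Or.inr (Or.inr (by rw [inter_comm]; exact h))
          · exact hM1b I hI' K hK' 
      · intro F hF hcard hdisj
        by_cases hIF : I₂ ∈ F
        · by_cases hI1F : I₁ ∈ F
          · exfalso
            exact hint.ne_empty (hdisj I₁ hI1F I₂ hIF hne)
          · apply hM2c F ?_ hcard hdisj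
            intro K hK
            rcases mem_insert.1 (hF hK) with rfl | hK'
            · exact mem_insert_self _ _
            · rcases mem_insert.1 hK' with rfl | h
              · exact absurd hK hI1F
              · exact mem_insert_of_mem h
        · apply hM1c F ?_ hcard hdisj
          intro K hK
          rcases mem_insert.1 (hF hK) with rfl | hK'
          · exact absurd hK hIF
          · exact hK'
    have heq := hM1max _ hnested (subset_insert _ _)
    have hmem : I₂ ∈ insert I₁ N := heq ▸ mem_insert_self I₂ (insert I₁ N)
    rcases mem_insert.1 hmem with h | h
    · exact hne h.symm
    · exact hI₂N h
  have h12 : ¬ I₁ ⊆ I₂ := fun h => hkey (Or.inl h)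
  have h21 : ¬ I₂ ⊆ I₁ := fun h => hkey (Or.inr h)
  obtain ⟨hU, hJB⟩ := hfano I₁ hI₁ I₂ hI₂ hint h12 h21
  set J : Finset α := I₁ ∩ I₂ with hJdef
  have hJI₁sub : J ⊆ I₁ := inter_subset_left
  have hJI₂sub : J ⊆ I₂ := inter_subset_right
  have hJI₁ : J ≠ I₁ := fun h => h12 (h ▸ hJI₂sub)
  have hJI₂ : J ≠ I₂ := fun h => h21 (h ▸ hJI₁sub)
  have hI₁S : I₁ ⊆ S := (hsub I₁ hI₁).1
  have hJS : J ≠ S := by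
    intro h
    have : I₁ = S := Subset.antisymm hI₁S (h ▸ hJI₁sub)
    exact hJI₁ (h.trans this.symm)
  -- classification of elements of N disjoint from J
  have hclass : ∀ K ∈ N, K ∩ J = ∅ → (K ⊆ I₁ ∨ K ∩ I₁ = ∅) ∧ (K ⊆ I₂ ∨ K ∩ I₂ = ∅) := by
    intro K hK hKJ
    have hJnotK : ¬ J ⊆ K := by
      intro h
      have h2 : J ⊆ K ∩ J := subset_inter h Subset.rfl
      rw [hKJ, subset_empty] at h2
      exact hint.ne_empty h2
    constructor
    · rcases hM1b K (mem_insert_of_mem hK) I₁ (mem_insert_self _ _) with h | h | h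
      · exact Or.inl h
      · exact absurd (hJI₁sub.trans h) hJnotK
      · exact Or.inr h
    · rcases hM2b K (mem_insert_of_mem hK) I₂ (mem_insert_self _ _) with h | h | h
      · exact Or.inl h
      · exact absurd (hJI₂sub.trans h) hJnotK
      · exact Or.inr h
  -- relation of J with elements of insert I₁ N
  have hrel : ∀ K ∈ insert I₁ N, J ⊆ K ∨ K ⊆ J ∨ J ∩ K = ∅ := by
    intro K hK
    rcases mem_insert.1 hK with rfl | hK
    · exact Or.inl hJI₁sub
    · rcases hM1b K (mem_insert_of_mem hK) I₁ (mem_insert_self _ _) with h1 | h1 | h1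
      · rcases hM2b K (mem_insert_of_mem hK) I₂ (mem_insert_self _ _) with h2 | h2 | h2
        · exact Or.inr (Or.inl (subset_inter h1 h2))
        · exact Or.inl (hJI₂sub.trans h2)
        · refine Or.inr (Or.inr ?_)
          rw [eq_empty_iff_forall_notMem]
          intro x hx
          rw [mem_inter] at hx
          have hx2 : x ∈ K ∩ I₂ := mem_inter.2 ⟨hx.2, hJI₂sub hx.1⟩
          rw [h2] at hx2
          exact notMem_empty x hx2
      · exact Or.inl (hJI₁sub.trans h1)
      · refine Or.inr (Or.inr ?_)
        rw [eq_empty_iff_forall_notMem]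
        intro x hx
        rw [mem_inter] at hx
        have hx2 : x ∈ K ∩ I₁ := mem_inter.2 ⟨hx.2, hJI₁sub hx.1⟩
        rw [h1] at hx2
        exact notMem_empty x hx2
  have hnested : IsNestedSet B (insert J (insert I₁ N)) := by
    refine ⟨?_, ?_, ?_⟩
    · intro K hK
      rcases mem_insert.1 hK with rfl | hK
      · refine mem_sdiff.2 ⟨hJB, ?_⟩
        rw [hconn, mem_singleton]
        exact hJS
      · exact hM1a hK
    · intro I hI K hK
      rcases mem_insert.1 hI with rfl | hI
      · rcases mem_insert.1 hK with rfl | hK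
        · exact Or.inl Subset.rfl
        · exact hrel K hK
      · rcases mem_insert.1 hK with rfl | hK
        · rcases hrel I hI with h | h | h
          · exact Or.inr (Or.inl h)
          · exact Or.inl h
          · exact Or.inr (Or.inr (by rw [inter_comm]; exact h))
        · exact hM1b I hI K hK
    · intro F hF hcard hdisj
      by_cases hJF : J ∈ F
      · intro hXB
        have hI1F : I₁ ∉ F := by
          intro h
          have hd := hdisj J hJF I₁ h hJI₁
          rw [inter_eq_left.2 hJI₁sub] at hd
          exact hint.ne_empty hd
        have hI2F : I₂ ∉ F := by
          intro h
          rcases mem_insert.1 (hF h) with heq | h'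
          · exact hJI₂ heq.symm
          · rcases mem_insert.1 h' with heq | h''
            · exact hne heq.symm
            · exact hI₂N h''
        have hFN : ∀ K ∈ F, K ≠ J → K ∈ N := by
          intro K hK hKJ
          rcases mem_insert.1 (hF hK) with h | h
          · exact absurd h hKJ
          · rcases mem_insert.1 h with rfl | h
            · exact absurd hK hI1F
            · exact h
        have hJX : J ⊆ F.sup id := le_sup (f := id) hJF
        set E := (F.erase J).filter (fun K => ¬ K ⊆ I₂) with hEdef
        have hEN : ∀ K ∈ E, K ∈ N := by
          intro K hK
          have hK' := (mem_filter.1 hK).1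
          exact hFN K (mem_of_mem_erase hK') (ne_of_mem_erase hK')
        have hEdisj2 : ∀ K ∈ E, K ∩ I₂ = ∅ := by
          intro K hK
          obtain ⟨hK', hns⟩ := mem_filter.1 hK
          have hKN : K ∈ N := hFN K (mem_of_mem_erase hK') (ne_of_mem_erase hK')
          have hKJ : K ∩ J = ∅ :=
            hdisj K (mem_of_mem_erase hK') J hJF (ne_of_mem_erase hK')
          rcases (hclass K hKN hKJ).2 with h | h
          · exact absurd h hns
          · exact h
        by_cases hEne : E.Nonempty
        · -- contradiction via insert I₂ E
          have hXI₂ : F.sup id ∪ I₂ ∈ B := by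
            apply hunion _ hXB _ hI₂
            obtain ⟨x, hx⟩ := hint
            exact ⟨x, mem_inter.2 ⟨hJX hx, hJI₂sub hx⟩⟩
          have hI2E : I₂ ∉ E := fun h => hI2F (mem_of_mem_erase (mem_filter.1 h).1)
          have hsup : (insert I₂ E).sup id = F.sup id ∪ I₂ := by
            simp only [sup_insert, id_eq, sup_eq_union]
            apply Subset.antisymm
            · apply union_subset subset_union_right
              have hEF : E ⊆ F := fun K hK => mem_of_mem_erase (mem_filter.1 hK).1
              have hEsup : E.sup id ⊆ F.sup id := sup_mono hEF
              exact hEsup.trans subset_union_left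
            · apply union_subset ?_ subset_union_left
              intro x hx
              obtain ⟨K, hKF, hxK⟩ := mem_sup.1 hx
              by_cases hKJ2 : K = J
              · exact mem_union_left _ (hJI₂sub (hKJ2 ▸ hxK))
              · by_cases hKI2 : K ⊆ I₂
                · exact mem_union_left _ (hKI2 hxK)
                · have hKE : K ∈ E := mem_filter.2 ⟨mem_erase.2 ⟨hKJ2, hKF⟩, hKI2⟩
                  have hKsub : K ⊆ E.sup id := le_sup (f := id) hKE
                  exact mem_union_right _ (hKsub hxK)
          have hcard2 : 2 ≤ (insert I₂ E).card := by
            rw [card_insert_of_notMem hI2E]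
            have := card_pos.2 hEne
            omega
          have hdisj2 : ∀ I ∈ insert I₂ E, ∀ K ∈ insert I₂ E, I ≠ K → I ∩ K = ∅ := by
            intro I hI K hK hIK
            rcases mem_insert.1 hI with rfl | hI
            · rcases mem_insert.1 hK with rfl | hK
              · exact absurd rfl hIK
              · rw [inter_comm]
                exact hEdisj2 K hK
            · rcases mem_insert.1 hK with rfl | hK
              · exact hEdisj2 I hI
              · exact hdisj I (mem_of_mem_erase (mem_filter.1 hI).1)
                  K (mem_of_mem_erase (mem_filter.1 hK).1) hIK
          have hsub2 : insert I₂ E ⊆ insert I₂ N := by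
            intro K hK
            rcases mem_insert.1 hK with rfl | hK
            · exact mem_insert_self _ _
            · exact mem_insert_of_mem (hEN K hK)
          exact hM2c _ hsub2 hcard2 hdisj2 (by rw [hsup]; exact hXI₂)
        · -- E empty: use insert I₁ (F.erase J)
          have hall2 : ∀ K ∈ F.erase J, K ⊆ I₂ := by
            intro K hK
            by_contra h
            exact hEne ⟨K, mem_filter.2 ⟨hK, h⟩⟩
          have hall1 : ∀ K ∈ F.erase J, K ∩ I₁ = ∅ := by
            intro K hK
            have hKN : K ∈ N := hFN K (mem_of_mem_erase hK) (ne_of_mem_erase hK)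
            have hKJ : K ∩ J = ∅ :=
              hdisj K (mem_of_mem_erase hK) J hJF (ne_of_mem_erase hK)
            rcases (hclass K hKN hKJ).1 with h | h
            · exfalso
              obtain ⟨x, hx⟩ := (hsub K (mem_sdiff.1 (hN1 hKN)).1).2
              have hx2 : x ∈ K ∩ J :=
                mem_inter.2 ⟨hx, mem_inter.2 ⟨h hx, hall2 K hK hx⟩⟩
              rw [hKJ] at hx2
              exact notMem_empty x hx2
            · exact h
          have hXI₁ : F.sup id ∪ I₁ ∈ B := by
            apply hunion _ hXB _ hI₁
            obtain ⟨x, hx⟩ := hint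
            exact ⟨x, mem_inter.2 ⟨hJX hx, hJI₁sub hx⟩⟩
          have hI1er : I₁ ∉ F.erase J := fun h => hI1F (mem_of_mem_erase h)
          have herne : (F.erase J).Nonempty := by
            rw [← card_pos, card_erase_of_mem hJF]
            omega
          have hsup : (insert I₁ (F.erase J)).sup id = F.sup id ∪ I₁ := by
            simp only [sup_insert, id_eq, sup_eq_union]
            apply Subset.antisymm
            · apply union_subset subset_union_right
              have hesup : (F.erase J).sup id ⊆ F.sup id := sup_mono (erase_subset J F)
              exact hesup.trans subset_union_left
            · apply union_subset ?_ subset_union_left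
              intro x hx
              obtain ⟨K, hKF, hxK⟩ := mem_sup.1 hx
              by_cases hKJ2 : K = J
              · exact mem_union_left _ (hJI₁sub (hKJ2 ▸ hxK))
              · have hKsub : K ⊆ (F.erase J).sup id :=
                  le_sup (f := id) (mem_erase.2 ⟨hKJ2, hKF⟩)
                exact mem_union_right _ (hKsub hxK)
          have hcard1 : 2 ≤ (insert I₁ (F.erase J)).card := by
            rw [card_insert_of_notMem hI1er]
            have := card_pos.2 herne
            omega
          have hdisj1 : ∀ I ∈ insert I₁ (F.erase J), ∀ K ∈ insert I₁ (F.erase J),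
              I ≠ K → I ∩ K = ∅ := by
            intro I hI K hK hIK
            rcases mem_insert.1 hI with rfl | hI
            · rcases mem_insert.1 hK with rfl | hK
              · exact absurd rfl hIK
              · rw [inter_comm]
                exact hall1 K hK
            · rcases mem_insert.1 hK with rfl | hK
              · exact hall1 I hI
              · exact hdisj I (mem_of_mem_erase hI) K (mem_of_mem_erase hK) hIK
          have hsub1 : insert I₁ (F.erase J) ⊆ insert I₁ N := by
            intro K hK
            rcases mem_insert.1 hK with rfl | hK
            · exact mem_insert_self _ _
            · exact mem_insert_of_mem (hFN K (mem_of_mem_erase hK) (ne_of_mem_erase hK))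
          exact hM1c _ hsub1 hcard1 hdisj1 (by rw [hsup]; exact hXI₁)
      · apply hM1c F ?_ hcard hdisj
        intro K hK
        rcases mem_insert.1 (hF hK) with rfl | h
        · exact absurd hK hJF
        · exact h
  have heq := hM1max _ hnested (subset_insert _ _)
  have hJmem : J ∈ insert I₁ N := heq ▸ mem_insert_self J (insert I₁ N)
  rcases mem_insert.1 hJmem with h | h
  · exact absurd h hJI₁
  · exact ⟨hU, hJB, h⟩
end

section
/- If a finite simple graph G contains an induced cycle C on k ≥ 4 nodes as a proper induced subgraph of a connected component, then there exist I_1, I_2 ∈ B(G) with I_1 ∩ I_2 ≠ ∅, I_1 ⊄ I_2, I_2 ⊄ I_1, such that I_1 ∩ I_2 ∉ B(G) and I_1 ∪ I_2 is a proper subset of the vertex set of that connected component (so the weak Fano criterion fails). -/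
open Finset

variable {α : Type*} [DecidableEq α]

open scoped Classical in
/-- The graphical building set `B(G)` of a finite simple graph `G`:
the nonempty subsets of vertices inducing a connected subgraph. -/
noncomputable def graphicalBuildingSet {V : Type*} [Fintype V] [DecidableEq V]
    (G : SimpleGraph V) : Finset (Finset V) :=
  Finset.univ.filter fun I => I.Nonempty ∧ (G.induce (I : Set V)).Connected

section Helpers

private lemma induce_connected_of_chain {V : Type*} (G : SimpleGraph V) {n : ℕ}
    (w : Fin (n + 1) → V) (s : Set V)
    (hmem : ∀ i, w i ∈ s) (hsurj : ∀ x ∈ s, ∃ i, w i = x)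
    (hadj : ∀ i : Fin n, G.Adj (w i.castSucc) (w i.succ)) :
    (G.induce s).Connected := by
  have key : ∀ i : Fin (n + 1),
      (G.induce s).Reachable ⟨w 0, hmem 0⟩ ⟨w i, hmem i⟩ := by
    intro i
    induction i using Fin.induction with
    | zero => exact SimpleGraph.Reachable.refl _
    | succ i ih =>
      refine ih.trans (SimpleGraph.Adj.reachable ?_)
      exact hadj i
  rw [SimpleGraph.connected_iff]
  refine ⟨fun x y => ?_, ⟨⟨w 0, hmem 0⟩⟩⟩
  obtain ⟨a, ha⟩ := x
  obtain ⟨b, hb⟩ := y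
  obtain ⟨i, rfl⟩ := hsurj a ha
  obtain ⟨j, rfl⟩ := hsurj b hb
  exact (key i).symm.trans (key j)

private lemma not_connected_pair {V : Type*} (G : SimpleGraph V) {a b : V}
    (hne : a ≠ b) (hnadj : ¬ G.Adj a b) :
    ¬ (G.induce ({a, b} : Set V)).Connected := by
  intro h
  have hbot : (G.induce ({a, b} : Set V)) = ⊥ := by
    ext ⟨x, hx⟩ ⟨y, hy⟩
    simp only [SimpleGraph.comap_adj, Function.Embedding.coe_subtype, SimpleGraph.bot_adj,
      iff_false]
    simp only [Set.mem_insert_iff, Set.mem_singleton_iff] at hx hy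
    rcases hx with rfl | rfl <;> rcases hy with rfl | rfl
    · exact G.irrefl
    · exact hnadj
    · exact fun h' => hnadj h'.symm
    · exact G.irrefl
  have hr := h.preconnected ⟨a, by simp⟩ ⟨b, by simp⟩
  rw [hbot, SimpleGraph.reachable_bot] at hr
  exact hne (congrArg Subtype.val hr)

end Helpers

open scoped Classical in
/-- If `G` contains an induced cycle on `k ≥ 4` nodes as a proper induced subgraph of a
connected component, then the weak Fano criterion fails: there are incomparable
intersecting `I₁, I₂ ∈ B(G)` with `I₁ ∩ I₂ ∉ B(G)` and `I₁ ∪ I₂` a proper subset of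
the vertex set of that component. -/
theorem weak_fano_fails_of_induced_cycle
    {V : Type*} [Fintype V] [DecidableEq V] (G : SimpleGraph V)
    (c : G.ConnectedComponent) (C : Finset V) (k : ℕ) (hk : 4 ≤ k)
    (hCsub : ↑C ⊆ c.supp) (hCne : C ≠ c.supp.toFinset)
    (hcyc : Nonempty (G.induce (C : Set V) ≃g SimpleGraph.cycleGraph k)) :
    ∃ I₁ ∈ graphicalBuildingSet G, ∃ I₂ ∈ graphicalBuildingSet G,
      (I₁ ∩ I₂).Nonempty ∧ ¬I₁ ⊆ I₂ ∧ ¬I₂ ⊆ I₁ ∧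
      I₁ ∩ I₂ ∉ graphicalBuildingSet G ∧
      I₁ ∪ I₂ ⊂ c.supp.toFinset := by
  obtain ⟨e⟩ := hcyc
  set v : Fin k → V := fun i => ((e.symm i : (C : Set V)) : V) with hv
  have hinj : Function.Injective v := fun i j h =>
    e.symm.injective (Subtype.val_injective h)
  have hmemC : ∀ i, v i ∈ C := fun i => (e.symm i).2
  have hadj : ∀ i j, G.Adj (v i) (v j) ↔ (SimpleGraph.cycleGraph k).Adj i j := by
    intro i j
    exact e.symm.map_adj_iff
  have hmemB : ∀ I : Finset V,
      I ∈ graphicalBuildingSet G ↔ I.Nonempty ∧ (G.induce (I : Set V)).Connected := by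
    intro I
    simp [graphicalBuildingSet]
  have hmk : ∀ (m n : ℕ) (hm' : m < k) (hn' : n < k), m = n → v ⟨m, hm'⟩ = v ⟨n, hn'⟩ := by
    intro m n hm' hn' h
    subst h
    rfl
  have hvne : ∀ (m n : ℕ) (hm : m < k) (hn : n < k), m ≠ n → v ⟨m, hm⟩ ≠ v ⟨n, hn⟩ := by
    intro m n hm hn hmn h
    exact hmn (congrArg Fin.val (hinj h))
  -- adjacency of consecutive (mod k) vertices
  have hadjmod : ∀ (a b : ℕ) (hb : b = a + 1) (pa : a % k < k) (pb : b % k < k),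
      G.Adj (v ⟨a % k, pa⟩) (v ⟨b % k, pb⟩) := by
    intro a b hb pa pb
    subst hb
    rw [hadj, SimpleGraph.cycleGraph_adj']
    right
    rw [Fin.sub_def]
    have h2 : (a + 1) % k = (a % k + 1) % k := by
      conv_lhs => rw [← Nat.mod_add_mod]
    show (k - a % k + (a + 1) % k) % k = 1
    rw [h2]
    by_cases hcase : a % k + 1 < k
    · rw [Nat.mod_eq_of_lt hcase]
      rw [show k - a % k + (a % k + 1) = k + 1 by omega, Nat.add_mod_left]
      exact Nat.mod_eq_of_lt (by omega)
    · have hek : a % k + 1 = k := by omega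
      rw [hek, Nat.mod_self]
      rw [show k - a % k + 0 = 1 by omega]
      exact Nat.mod_eq_of_lt (by omega)
  have hadjsucc : ∀ (a b : ℕ) (hb : b = a + 1) (pa : a < k) (pb : b < k),
      G.Adj (v ⟨a, pa⟩) (v ⟨b, pb⟩) := by
    intro a b hb pa pb
    have h := hadjmod a b hb (Nat.mod_lt _ (by omega)) (Nat.mod_lt _ (by omega))
    rw [hmk (a % k) a _ pa (Nat.mod_eq_of_lt pa),
        hmk (b % k) b _ pb (Nat.mod_eq_of_lt pb)] at h
    exact h
  -- the distinguished vertices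
  have h0 : (0 : ℕ) < k := by omega
  have h1 : (1 : ℕ) < k := by omega
  have h2 : (2 : ℕ) < k := by omega
  have h3 : (3 : ℕ) < k := by omega
  set a0 : V := v ⟨0, h0⟩ with ha0
  set a1 : V := v ⟨1, h1⟩ with ha1
  set a2 : V := v ⟨2, h2⟩ with ha2
  set a3 : V := v ⟨3, h3⟩ with ha3
  -- the two building set elements
  set w₁ : Fin (2 + 1) → V := fun j => v ⟨j.val, by omega⟩ with hw₁
  set w₂ : Fin (k - 2 + 1) → V :=
    fun j => v ⟨(j.val + 2) % k, Nat.mod_lt _ (by omega)⟩ with hw₂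
  set I₁ : Finset V := Finset.image w₁ Finset.univ with hI₁
  set I₂ : Finset V := Finset.image w₂ Finset.univ with hI₂
  -- membership characterizations
  have hmem1 : ∀ x, x ∈ I₁ ↔ x = a0 ∨ x = a1 ∨ x = a2 := by
    intro x
    rw [hI₁, Finset.mem_image]
    constructor
    · rintro ⟨j, -, rfl⟩
      have hj := j.isLt
      simp only [hw₁, ha0, ha1, ha2]
      rcases (by omega : j.val = 0 ∨ j.val = 1 ∨ j.val = 2) with h | h | h
      · exact Or.inl (hmk _ _ _ _ h)
      · exact Or.inr (Or.inl (hmk _ _ _ _ h))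
      · exact Or.inr (Or.inr (hmk _ _ _ _ h))
    · rintro (rfl | rfl | rfl)
      · exact ⟨⟨0, by omega⟩, Finset.mem_univ _, by
          simp only [hw₁, ha0]⟩
      · exact ⟨⟨1, by omega⟩, Finset.mem_univ _, by
          simp only [hw₁, ha1]⟩
      · exact ⟨⟨2, by omega⟩, Finset.mem_univ _, by
          simp only [hw₁, ha2]⟩
  have hmem2 : ∀ x, x ∈ I₂ ↔ x = a0 ∨ ∃ m : ℕ, 2 ≤ m ∧ ∃ hm : m < k, x = v ⟨m, hm⟩ := by
    intro x
    rw [hI₂, Finset.mem_image]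
    constructor
    · rintro ⟨j, -, rfl⟩
      have hj := j.isLt
      simp only [hw₂, ha0]
      by_cases hcase : j.val = k - 2
      · refine Or.inl (hmk _ _ _ _ ?_)
        rw [hcase, show k - 2 + 2 = k by omega, Nat.mod_self]
      · refine Or.inr ⟨j.val + 2, by omega, by omega, (hmk _ _ _ _ ?_).symm⟩
        exact (Nat.mod_eq_of_lt (by omega)).symm
    · rintro (rfl | ⟨m, hm2, hmlt, rfl⟩)
      · refine ⟨⟨k - 2, by omega⟩, Finset.mem_univ _, ?_⟩
        simp only [hw₂, ha0]
        refine hmk _ _ _ _ ?_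
        rw [show k - 2 + 2 = k by omega, Nat.mod_self]
      · refine ⟨⟨m - 2, by omega⟩, Finset.mem_univ _, ?_⟩
        simp only [hw₂]
        refine hmk _ _ _ _ ?_
        rw [show m - 2 + 2 = m by omega]
        exact Nat.mod_eq_of_lt hmlt
  -- key membership facts
  have ha1nI2 : a1 ∉ I₂ := by
    rw [hmem2]
    rintro (h | ⟨m, hm2, hmlt, h⟩)
    · rw [ha1, ha0] at h
      exact hvne 1 0 h1 h0 (by omega) h
    · rw [ha1] at h
      exact hvne 1 m h1 hmlt (by omega) h
  have ha3nI1 : a3 ∉ I₁ := by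
    rw [hmem1]
    rintro (h | h | h)
    · rw [ha3, ha0] at h; exact hvne 3 0 h3 h0 (by omega) h
    · rw [ha3, ha1] at h; exact hvne 3 1 h3 h1 (by omega) h
    · rw [ha3, ha2] at h; exact hvne 3 2 h3 h2 (by omega) h
  have ha0I1 : a0 ∈ I₁ := (hmem1 a0).mpr (Or.inl rfl)
  have ha1I1 : a1 ∈ I₁ := (hmem1 a1).mpr (Or.inr (Or.inl rfl))
  have ha2I1 : a2 ∈ I₁ := (hmem1 a2).mpr (Or.inr (Or.inr rfl))
  have ha0I2 : a0 ∈ I₂ := (hmem2 a0).mpr (Or.inl rfl)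
  have ha2I2 : a2 ∈ I₂ := (hmem2 a2).mpr (Or.inr ⟨2, le_refl _, h2, ha2⟩)
  have ha3I2 : a3 ∈ I₂ := (hmem2 a3).mpr (Or.inr ⟨3, by omega, h3, ha3⟩)
  -- the intersection
  have hint : I₁ ∩ I₂ = {a0, a2} := by
    ext x
    rw [Finset.mem_inter, Finset.mem_insert, Finset.mem_singleton]
    constructor
    · rintro ⟨hx1, hx2⟩
      rcases (hmem1 x).mp hx1 with rfl | rfl | rfl
      · exact Or.inl rfl
      · exact absurd hx2 ha1nI2
      · exact Or.inr rfl
    · rintro (rfl | rfl)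
      · exact ⟨ha0I1, ha0I2⟩
      · exact ⟨ha2I1, ha2I2⟩
  -- I₁ and I₂ are connected
  have hconn1 : (G.induce (I₁ : Set V)).Connected := by
    refine induce_connected_of_chain G w₁ _ ?_ ?_ ?_
    · intro i
      exact Finset.mem_coe.mpr (Finset.mem_image.mpr ⟨i, Finset.mem_univ _, rfl⟩)
    · intro x hx
      obtain ⟨j, -, rfl⟩ := Finset.mem_image.mp (Finset.mem_coe.mp hx)
      exact ⟨j, rfl⟩
    · intro i
      simp only [hw₁]
      exact hadjsucc i.castSucc.val i.succ.val
        (by simp only [Fin.val_succ, Fin.coe_castSucc]) _ _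
  have hconn2 : (G.induce (I₂ : Set V)).Connected := by
    refine induce_connected_of_chain G w₂ _ ?_ ?_ ?_
    · intro i
      exact Finset.mem_coe.mpr (Finset.mem_image.mpr ⟨i, Finset.mem_univ _, rfl⟩)
    · intro x hx
      obtain ⟨j, -, rfl⟩ := Finset.mem_image.mp (Finset.mem_coe.mp hx)
      exact ⟨j, rfl⟩
    · intro i
      simp only [hw₂]
      exact hadjmod (i.castSucc.val + 2) (i.succ.val + 2)
        (by simp only [Fin.val_succ, Fin.coe_castSucc]) _ _
  -- the intersection is not connected
  have hnadj02 : ¬ G.Adj a0 a2 := by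
    rw [ha0, ha2, hadj, SimpleGraph.cycleGraph_adj']
    rintro (h | h)
    · rw [Fin.sub_def] at h
      have h' : (k - 2 + 0) % k = 1 := h
      rw [Nat.add_zero, Nat.mod_eq_of_lt (by omega)] at h'
      omega
    · rw [Fin.sub_def] at h
      have h' : (k - 0 + 2) % k = 1 := h
      rw [Nat.sub_zero, Nat.add_mod_left] at h'
      rw [Nat.mod_eq_of_lt (by omega)] at h'
      omega
  have hnotB : I₁ ∩ I₂ ∉ graphicalBuildingSet G := by
    rw [hint, hmemB]
    rintro ⟨-, hcon⟩
    have hcoe : (↑({a0, a2} : Finset V) : Set V) = ({a0, a2} : Set V) := by simp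
    rw [hcoe] at hcon
    have hne02 : a0 ≠ a2 := by
      rw [ha0, ha2]
      exact hvne 0 2 h0 h2 (by omega)
    exact not_connected_pair G hne02 hnadj02 hcon
  -- the union is properly contained in the component
  have hsub1 : I₁ ⊆ C := by
    intro x hx
    obtain ⟨j, -, rfl⟩ := Finset.mem_image.mp hx
    simp only [hw₁]
    exact hmemC _
  have hsub2 : I₂ ⊆ C := by
    intro x hx
    obtain ⟨j, -, rfl⟩ := Finset.mem_image.mp hx
    simp only [hw₂]
    exact hmemC _
  have hCss : C ⊂ c.supp.toFinset := by
    refine Finset.ssubset_iff_subset_ne.mpr ⟨?_, hCne⟩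
    intro x hx
    rw [Set.mem_toFinset]
    exact hCsub hx
  refine ⟨I₁, (hmemB I₁).mpr ⟨⟨a0, ha0I1⟩, hconn1⟩,
    I₂, (hmemB I₂).mpr ⟨⟨a0, ha0I2⟩, hconn2⟩, ?_, ?_, ?_, hnotB, ?_⟩
  · exact ⟨a0, Finset.mem_inter.mpr ⟨ha0I1, ha0I2⟩⟩
  · exact fun h => ha1nI2 (h ha1I1)
  · exact fun h => ha3nI1 (h ha3I2)
  · exact Finset.ssubset_of_subset_of_ssubset (Finset.union_subset hsub1 hsub2) hCss
end

section
/- Let B be a connected building set on S, let I be a maximal element of B \ ({{i} : i ∈ S} ∪ {S}), and let K_1, ..., K_r be the maximal elements of B|_I \ {I}. Assume B satisfies the Fano condition: for all J_1, J_2 ∈ B with J_1 ∩ J_2 ≠ ∅, J_1 ⊄ J_2, J_2 ⊄ J_1, one has J_1 ∪ J_2 = S and J_1 ∩ J_2 ∈ B. Then I is the disjoint union of K_1, ..., K_r. -/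
open Finset

variable {α : Type*} [DecidableEq α]

/-- For a connected building set satisfying the Fano condition, a maximal element `I` of
`B \ (singletons ∪ {S})` is the disjoint union of the maximal elements of `B|_I \ {I}`. -/
theorem fano_maximal_element_disjoint_union
    (S : Finset α) (B : Finset (Finset α)) (hB : IsBuildingSet S B)
    (hconn : bmax B = {S})
    (hfano : ∀ J₁ ∈ B, ∀ J₂ ∈ B, (J₁ ∩ J₂).Nonempty → ¬J₁ ⊆ J₂ → ¬J₂ ⊆ J₁ →
      J₁ ∪ J₂ = S ∧ J₁ ∩ J₂ ∈ B)
    (I : Finset α)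
    (hI : I ∈ bmax (B \ insert S (S.image fun i => ({i} : Finset α)))) :
    (∀ K₁ ∈ bmax ((restrict B I).erase I), ∀ K₂ ∈ bmax ((restrict B I).erase I),
      K₁ ≠ K₂ → K₁ ∩ K₂ = ∅) ∧
    (bmax ((restrict B I).erase I)).sup id = I := by

  obtain ⟨hS, hmem, hclosed, hsing⟩ := hB
  rw [bmax, mem_filter, mem_sdiff, mem_insert] at hI
  obtain ⟨⟨hIB, hIni⟩, hImax⟩ := hI
  have hInS : I ≠ S := fun h => hIni (Or.inl h)
  have hIS : I ⊆ S := (hmem I hIB).1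
  -- membership facts for elements of bmax ((restrict B I).erase I)
  have hfact : ∀ K ∈ bmax ((restrict B I).erase I), K ∈ B ∧ K ⊆ I ∧ K ≠ I ∧
      (∀ J ∈ (restrict B I).erase I, K ⊆ J → K = J) := by
    intro K hK
    have hKmax : ∀ J ∈ (_root_.restrict B I).erase I, K ⊆ J → K = J := (mem_filter.mp hK).2
    have hKm := (mem_filter.mp hK).1
    rw [mem_erase] at hKm
    have := mem_filter.mp hKm.2
    exact ⟨this.1, this.2, hKm.1, hKmax⟩
  constructor
  · intro K₁ h1 K₂ h2 hne
    obtain ⟨h1B, h1I, h1nI, h1max⟩ := hfact K₁ h1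
    obtain ⟨h2B, h2I, h2nI, h2max⟩ := hfact K₂ h2
    by_contra hcap
    have hcap' : (K₁ ∩ K₂).Nonempty := nonempty_iff_ne_empty.mpr hcap
    have hmem1 : K₁ ∈ (restrict B I).erase I := by
      simp only [mem_erase, _root_.restrict, mem_filter]; exact ⟨h1nI, h1B, h1I⟩
    have hmem2 : K₂ ∈ (restrict B I).erase I := by
      simp only [mem_erase, _root_.restrict, mem_filter]; exact ⟨h2nI, h2B, h2I⟩
    have hn12 : ¬K₁ ⊆ K₂ := fun h => hne (h1max K₂ hmem2 h)
    have hn21 : ¬K₂ ⊆ K₁ := fun h => hne ((h2max K₁ hmem1 h).symm)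
    have := (hfano K₁ h1B K₂ h2B hcap' hn12 hn21).1
    have : S ⊆ I := this ▸ union_subset h1I h2I
    exact hInS (subset_antisymm hIS this)
  · apply subset_antisymm
    · exact Finset.sup_le fun K hK => (hfact K hK).2.1
    · intro i hi
      have hiS : i ∈ S := hIS hi
      have hsi : ({i} : Finset α) ∈ (restrict B I).erase I := by
        simp only [mem_erase, _root_.restrict, mem_filter]
        refine ⟨?_, hsing i hiS, singleton_subset_iff.mpr hi⟩
        intro h
        exact hIni (Or.inr (mem_image.mpr ⟨i, hiS, h⟩))
      -- take an element of maximal cardinality containing i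
      set T := ((restrict B I).erase I).filter (fun J => i ∈ J) with hT
      have hTne : T.Nonempty := ⟨{i}, by rw [hT, mem_filter]; exact ⟨hsi, mem_singleton_self i⟩⟩
      obtain ⟨M, hMT, hMmax⟩ := T.exists_max_image Finset.card hTne
      rw [hT, mem_filter] at hMT
      obtain ⟨hM, hiM⟩ := hMT
      have hMb : M ∈ bmax ((restrict B I).erase I) := by
        rw [bmax, mem_filter]
        refine ⟨hM, fun J hJ hMJ => ?_⟩
        have hJT : J ∈ T := by rw [hT, mem_filter]; exact ⟨hJ, hMJ hiM⟩
        exact Finset.eq_of_subset_of_card_le hMJ (hMmax J hJT)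
      exact (Finset.le_sup (f := id) hMb : M ⊆ _) hiM
end
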